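/- arXiv:2202.05873 — 6 statements merged into one kernel-verified Lean document; each statement's English description precedes it below -/
import Mathlib

section
/- Let $p>1$ and let $f:(0,\infty)\to[0,\infty)$ be measurable. Then $\int_0^\infty \left(\frac{1}{x}\int_0^x f(t)\,dt\right)^p dx \le \left(\frac{p}{p-1}\right)^p \int_0^\infty f(x)^p\,dx$. -/
open MeasureTheory Set
open scoped ENNReal

/-!
Schur's test. Hölder's inequality with the weight `t ^ (1/p)` on `(0, x)` gives
`(x⁻¹ ∫₀ˣ f) ^ p ≤ q ^ (p-1) x ^ (-1-1/q) ∫₀ˣ f(t) ^ p t ^ (1/q) dt`, where `q` is the conjugate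
exponent. Integrating in `x` and exchanging the order of integration, the inner integral
`∫ₜ^∞ x ^ (-1-1/q) dx = q t ^ (-1/q)` cancels the weight, which leaves `q ^ p ∫₀^∞ f ^ p`.
-/

theorem ENNReal.lintegral_rpow_le_lintegral_mul_rpow_mul_lintegral_inv_rpow {α : Type*}
    [MeasurableSpace α] {μ : Measure α} {p q : ℝ} (hpq : p.HolderConjugate q) {f w : α → ℝ≥0∞}
    (hf : AEMeasurable f μ) (hw : AEMeasurable w μ) (hw0 : ∀ᵐ a ∂μ, w a ≠ 0)
    (hw_top : ∀ᵐ a ∂μ, w a ≠ ∞) :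
    (∫⁻ a, f a ∂μ) ^ p ≤ (∫⁻ a, f a ^ p * w a ^ (p - 1) ∂μ) * (∫⁻ a, (w a)⁻¹ ∂μ) ^ (p - 1) := by
  have hp := hpq.pos
  have hsplit : ∀ᵐ a ∂μ, f a = (f a ^ p * w a ^ (p - 1)) ^ p⁻¹ * (w a)⁻¹ ^ q⁻¹ := by
    filter_upwards [hw0, hw_top] with a ha0 ha_top
    have hexp : (p - 1) * p⁻¹ = q⁻¹ := by
      rw [sub_mul, mul_inv_cancel₀ hp.ne', one_mul, hpq.one_sub_inv]
    rw [ENNReal.mul_rpow_of_nonneg _ _ (inv_nonneg.2 hp.le), ← ENNReal.rpow_mul, ← ENNReal.rpow_mul,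
      mul_inv_cancel₀ hp.ne', ENNReal.rpow_one, hexp, ENNReal.inv_rpow, mul_assoc,
      ENNReal.mul_inv_cancel (by positivity)
        (ENNReal.rpow_ne_top_of_nonneg hpq.symm.inv_nonneg ha_top), mul_one]
  have holder : ∫⁻ a, f a ∂μ
      ≤ (∫⁻ a, f a ^ p * w a ^ (p - 1) ∂μ) ^ p⁻¹ * (∫⁻ a, (w a)⁻¹ ∂μ) ^ q⁻¹ := by
    rw [lintegral_congr_ae hsplit]
    exact ENNReal.lintegral_mul_norm_pow_le ((hf.pow_const p).mul (hw.pow_const (p - 1)))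
      hw.inv hpq.inv_nonneg hpq.symm.inv_nonneg hpq.inv_add_inv_eq_one
  calc (∫⁻ a, f a ∂μ) ^ p
      ≤ ((∫⁻ a, f a ^ p * w a ^ (p - 1) ∂μ) ^ p⁻¹ * (∫⁻ a, (w a)⁻¹ ∂μ) ^ q⁻¹) ^ p :=
        ENNReal.rpow_le_rpow holder hp.le
    _ = _ := by
        rw [ENNReal.mul_rpow_of_nonneg _ _ hp.le, ← ENNReal.rpow_mul, ← ENNReal.rpow_mul,
          inv_mul_cancel₀ hp.ne', ENNReal.rpow_one, inv_mul_eq_div, hpq.div_conj_eq_sub_one]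

theorem lintegral_Ioo_rpow {c x : ℝ} (hc : -1 < c) (hx : 0 < x) :
    ∫⁻ t in Ioo 0 x, ENNReal.ofReal (t ^ c) = ENNReal.ofReal (x ^ (c + 1) / (c + 1)) := by
  have hint : IntegrableOn (fun t : ℝ ↦ t ^ c) (Ioc 0 x) :=
    (intervalIntegrable_iff_integrableOn_Ioc_of_le hx.le).mp
      (intervalIntegral.intervalIntegrable_rpow' hc)
  rw [setLIntegral_congr Ioo_ae_eq_Ioc, ← ofReal_integral_eq_lintegral_ofReal hint
    (ae_restrict_of_forall_mem measurableSet_Ioc fun t ht ↦ Real.rpow_nonneg ht.1.le c),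
    ← intervalIntegral.integral_of_le hx.le, integral_rpow (Or.inl hc),
    Real.zero_rpow (by linarith), sub_zero]

theorem lintegral_Ioi_rpow {b t : ℝ} (hb : b < -1) (ht : 0 < t) :
    ∫⁻ x in Ioi t, ENNReal.ofReal (x ^ b) = ENNReal.ofReal (-t ^ (b + 1) / (b + 1)) := by
  rw [← ofReal_integral_eq_lintegral_ofReal (integrableOn_Ioi_rpow_of_lt hb ht)
    (ae_restrict_of_forall_mem measurableSet_Ioi fun x hx ↦ Real.rpow_nonneg (ht.trans hx).le b),
    integral_Ioi_rpow_of_lt hb ht]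

theorem lintegral_Ioi_mul_lintegral_Ioo_swap {μ : Measure ℝ} [SFinite μ] (a : ℝ) {u g : ℝ → ℝ≥0∞}
    (hu : Measurable u) (hg : Measurable g) :
    ∫⁻ x in Ioi a, u x * ∫⁻ t in Ioo a x, g t ∂μ ∂μ
      = ∫⁻ t in Ioi a, g t * ∫⁻ x in Ioi t, u x ∂μ ∂μ := by
  set F : ℝ → ℝ → ℝ≥0∞ := fun x t ↦ (Iio x).indicator (fun t ↦ u x * g t) t
  have hF : Measurable (Function.uncurry F) :=
    ((hu.comp measurable_fst).mul (hg.comp measurable_snd)).indicator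
      (measurableSet_lt measurable_snd measurable_fst)
  calc ∫⁻ x in Ioi a, u x * ∫⁻ t in Ioo a x, g t ∂μ ∂μ
      = ∫⁻ x in Ioi a, ∫⁻ t in Ioi a, F x t ∂μ ∂μ := by
        refine setLIntegral_congr_fun measurableSet_Ioi fun x _ ↦ ?_
        rw [lintegral_indicator measurableSet_Iio, Measure.restrict_restrict measurableSet_Iio,
          Iio_inter_Ioi, lintegral_const_mul _ hg]
    _ = ∫⁻ t in Ioi a, ∫⁻ x in Ioi a, F x t ∂μ ∂μ := lintegral_lintegral_swap hF.aemeasurable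
    _ = ∫⁻ t in Ioi a, g t * ∫⁻ x in Ioi t, u x ∂μ ∂μ := by
        refine setLIntegral_congr_fun measurableSet_Ioi fun t (ht : a < t) ↦ ?_
        change ∫⁻ x in Ioi a, (Ioi t).indicator (fun x ↦ u x * g t) x ∂μ = _
        rw [lintegral_indicator measurableSet_Ioi, Measure.restrict_restrict measurableSet_Ioi,
          inter_eq_left.mpr (Ioi_subset_Ioi ht.le), lintegral_mul_const _ hu, mul_comm]

theorem lintegral_Ioi_rpow_mul_lintegral_Ioo_mul_rpow {r : ℝ} (hr : 0 < r) {h : ℝ → ℝ≥0∞}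
    (hh : Measurable h) :
    ∫⁻ x in Ioi 0, ENNReal.ofReal (x ^ (-1 - r)) * ∫⁻ t in Ioo 0 x, h t * ENNReal.ofReal (t ^ r)
      = ENNReal.ofReal r⁻¹ * ∫⁻ t in Ioi 0, h t := by
  rw [lintegral_Ioi_mul_lintegral_Ioo_swap 0 (by fun_prop) (by fun_prop),
    ← lintegral_const_mul' _ _ ENNReal.ofReal_ne_top]
  refine setLIntegral_congr_fun measurableSet_Ioi fun t (ht : 0 < t) ↦ ?_
  rw [lintegral_Ioi_rpow (by linarith) ht, mul_assoc, ← ENNReal.ofReal_mul (by positivity),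
    mul_comm]
  congr 2
  rw [show -1 - r + 1 = -r by ring, neg_div_neg_eq, mul_div_assoc', ← Real.rpow_add ht,
    add_neg_cancel, Real.rpow_zero, one_div]

theorem rpow_inv_mul_lintegral_Ioo_le {p q x : ℝ} (hpq : p.HolderConjugate q) {f : ℝ → ℝ≥0∞}
    (hf : Measurable f) (hx : 0 < x) :
    ((ENNReal.ofReal x)⁻¹ * ∫⁻ t in Ioo 0 x, f t) ^ p
      ≤ ENNReal.ofReal (q ^ (p - 1) * x ^ (-1 - q⁻¹))
          * ∫⁻ t in Ioo 0 x, f t ^ p * ENNReal.ofReal (t ^ q⁻¹) := by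
  have hp := hpq.pos
  have hq := hpq.symm.pos
  have hweight : ∫⁻ t in Ioo 0 x, f t ^ p * ENNReal.ofReal (t ^ p⁻¹) ^ (p - 1)
      = ∫⁻ t in Ioo 0 x, f t ^ p * ENNReal.ofReal (t ^ q⁻¹) := by
    refine setLIntegral_congr_fun measurableSet_Ioo fun t ht ↦ ?_
    rw [ENNReal.ofReal_rpow_of_nonneg (Real.rpow_nonneg ht.1.le _) hpq.sub_one_pos.le,
      ← Real.rpow_mul ht.1.le, ← hpq.one_sub_inv, mul_sub, mul_one, inv_mul_cancel₀ hp.ne']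
  have hweight_inv : ∫⁻ t in Ioo 0 x, (ENNReal.ofReal (t ^ p⁻¹))⁻¹
      = ENNReal.ofReal (q * x ^ q⁻¹) := by
    rw [setLIntegral_congr_fun measurableSet_Ioo fun t (ht : t ∈ Ioo 0 x) ↦ by
      rw [← ENNReal.ofReal_inv_of_pos (Real.rpow_pos_of_pos ht.1 _), ← Real.rpow_neg ht.1.le],
      lintegral_Ioo_rpow (neg_lt_neg (inv_lt_one_of_one_lt₀ hpq.lt)) hx, neg_add_eq_sub,
      hpq.one_sub_inv, div_eq_mul_inv, inv_inv, mul_comm]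
  have hexp : -p + q⁻¹ * (p - 1) = -1 - q⁻¹ := by
    rw [← hpq.one_sub_inv]
    field_simp
    ring
  calc ((ENNReal.ofReal x)⁻¹ * ∫⁻ t in Ioo 0 x, f t) ^ p
      = ENNReal.ofReal (x ^ (-p)) * (∫⁻ t in Ioo 0 x, f t) ^ p := by
        rw [ENNReal.mul_rpow_of_nonneg _ _ hp.le, ← ENNReal.ofReal_inv_of_pos hx,
          ENNReal.ofReal_rpow_of_pos (inv_pos.2 hx), Real.inv_rpow hx.le, Real.rpow_neg hx.le]
    _ ≤ ENNReal.ofReal (x ^ (-p))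
          * ((∫⁻ t in Ioo 0 x, f t ^ p * ENNReal.ofReal (t ^ q⁻¹))
            * ENNReal.ofReal (q * x ^ q⁻¹) ^ (p - 1)) := by
        gcongr
        rw [← hweight, ← hweight_inv]
        refine ENNReal.lintegral_rpow_le_lintegral_mul_rpow_mul_lintegral_inv_rpow hpq
          hf.aemeasurable (by fun_prop) ?_ ?_
        all_goals
          refine ae_restrict_of_forall_mem measurableSet_Ioo fun t ht ↦ ?_
          simp [ht.1, Real.rpow_pos_of_pos]
    _ = _ := by
        rw [ENNReal.ofReal_rpow_of_pos (by positivity), mul_left_comm, ← ENNReal.ofReal_mul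
          (by positivity), Real.mul_rpow hq.le (by positivity), ← Real.rpow_mul hx.le,
          mul_left_comm, ← Real.rpow_add hx, hexp, mul_comm]

theorem lintegral_rpow_inv_mul_lintegral_Ioo_le {p q : ℝ} (hpq : p.HolderConjugate q)
    {f : ℝ → ℝ≥0∞} (hf : Measurable f) :
    ∫⁻ x in Ioi 0, ((ENNReal.ofReal x)⁻¹ * ∫⁻ t in Ioo 0 x, f t) ^ p
      ≤ ENNReal.ofReal (q ^ p) * ∫⁻ x in Ioi 0, f x ^ p := by
  have hq := hpq.symm.pos
  calc ∫⁻ x in Ioi 0, ((ENNReal.ofReal x)⁻¹ * ∫⁻ t in Ioo 0 x, f t) ^ p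
      ≤ ∫⁻ x in Ioi 0, ENNReal.ofReal (q ^ (p - 1)) * (ENNReal.ofReal (x ^ (-1 - q⁻¹))
          * ∫⁻ t in Ioo 0 x, f t ^ p * ENNReal.ofReal (t ^ q⁻¹)) := by
        refine setLIntegral_mono' measurableSet_Ioi fun x (hx : 0 < x) ↦ ?_
        rw [← mul_assoc, ← ENNReal.ofReal_mul (by positivity)]
        exact rpow_inv_mul_lintegral_Ioo_le hpq hf hx
    _ = ENNReal.ofReal (q ^ (p - 1)) * (ENNReal.ofReal q⁻¹⁻¹ * ∫⁻ x in Ioi 0, f x ^ p) := by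
        rw [lintegral_const_mul' _ _ ENNReal.ofReal_ne_top,
          lintegral_Ioi_rpow_mul_lintegral_Ioo_mul_rpow (inv_pos.2 hq) (by fun_prop)]
    _ = ENNReal.ofReal (q ^ p) * ∫⁻ x in Ioi 0, f x ^ p := by
        rw [inv_inv, ← mul_assoc, ← ENNReal.ofReal_mul (by positivity),
          ← Real.rpow_add_one hq.ne', sub_add_cancel]

theorem hardy_classical (p : ℝ) (hp : 1 < p)
    (f : ℝ → ENNReal) (hf : Measurable f) :
    ∫⁻ x in Ioi (0:ℝ), ((ENNReal.ofReal x)⁻¹ * ∫⁻ t in Ioo (0:ℝ) x, f t) ^ p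
      ≤ ENNReal.ofReal ((p / (p - 1)) ^ p) * ∫⁻ x in Ioi (0:ℝ), f x ^ p :=
  lintegral_rpow_inv_mul_lintegral_Ioo_le (Real.HolderConjugate.conjExponent hp) hf
end

section
/- Let $p\ge 1$ and $\alpha < p-1$, and let $f:(0,\infty)\to[0,\infty)$ be measurable. Then $\int_0^\infty \left(\frac{1}{x}\int_0^x f(t)\,dt\right)^p x^{\alpha}\,dx \le \left(\frac{p}{p-1-\alpha}\right)^p \int_0^\infty f(x)^p x^{\alpha}\,dx$. -/
/-!
Put `β = (1 + α) / p`, so that `β < 1` and `α + 1 = p β`. Hölder's inequality on `(0, x)`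
applied to `f = (f t ^ γ) t ^ (-γ)`, `γ = (p - 1) β / p`, gives
`(∫₀ˣ f) ^ p ≤ (∫₀ˣ t ^ (-β)) ^ (p - 1) ∫₀ˣ f ^ p t ^ ((p - 1) β)`,
and the first factor is `(x ^ (1 - β) / (1 - β)) ^ (p - 1)`. Multiplied by `x ^ (α - p)` this
bounds the integrand by `(1 - β) ^ (1 - p) x ^ (β - 2) ∫₀ˣ f ^ p t ^ ((p - 1) β)`. After
exchanging the order of integration, `∫ₜ^∞ x ^ (β - 2) dx = t ^ (β - 1) / (1 - β)` restores the
weight `t ^ α`, and the constants combine to `(1 - β) ^ (-p) = (p / (p - 1 - α)) ^ p`.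
-/

open MeasureTheory Set

open scoped ENNReal

lemma ENNReal.ofReal_rpow_mul_ofReal_rpow {x : ℝ} (hx : 0 < x) (a b : ℝ) :
    ENNReal.ofReal (x ^ a) * ENNReal.ofReal (x ^ b) = ENNReal.ofReal (x ^ (a + b)) := by
  rw [← ENNReal.ofReal_mul (Real.rpow_nonneg hx.le a), Real.rpow_add hx]

lemma ENNReal.ofReal_rpow_rpow {x : ℝ} (hx : 0 < x) (a b : ℝ) :
    ENNReal.ofReal (x ^ a) ^ b = ENNReal.ofReal (x ^ (a * b)) := by
  rw [ENNReal.ofReal_rpow_of_pos (Real.rpow_pos_of_pos hx a), Real.rpow_mul hx.le]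

lemma lintegral_Ioi_ofReal_rpow {t E : ℝ} (ht : 0 < t) (hE : E < -1) :
    ∫⁻ x in Ioi t, ENNReal.ofReal (x ^ E) = ENNReal.ofReal (t ^ (E + 1) / -(E + 1)) := by
  rw [← ofReal_integral_eq_lintegral_ofReal (integrableOn_Ioi_rpow_of_lt hE ht)
      ((ae_restrict_mem measurableSet_Ioi).mono fun x hx => Real.rpow_nonneg (ht.trans hx).le E),
    integral_Ioi_rpow_of_lt hE ht, neg_div, div_neg]

lemma lintegral_Ioo_zero_ofReal_rpow {x r : ℝ} (hx : 0 < x) (hr : -1 < r) :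
    ∫⁻ t in Ioo 0 x, ENNReal.ofReal (t ^ r) = ENNReal.ofReal (x ^ (r + 1) / (r + 1)) := by
  have hint : IntegrableOn (fun t : ℝ => t ^ r) (Ioc 0 x) := by
    rw [← intervalIntegrable_iff_integrableOn_Ioc_of_le hx.le]
    exact intervalIntegral.intervalIntegrable_rpow' hr
  rw [Measure.restrict_congr_set Ioo_ae_eq_Ioc,
    ← ofReal_integral_eq_lintegral_ofReal hint
      ((ae_restrict_mem measurableSet_Ioc).mono fun t ht => Real.rpow_nonneg ht.1.le r),
    ← intervalIntegral.integral_of_le hx.le, integral_rpow (Or.inl hr),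
    Real.zero_rpow (by linarith), sub_zero]

lemma lintegral_Ioi_lintegral_Ioo_comm {F : ℝ → ℝ → ℝ≥0∞}
    (hF : Measurable (Function.uncurry F)) :
    ∫⁻ x in Ioi 0, ∫⁻ t in Ioo 0 x, F x t = ∫⁻ t in Ioi 0, ∫⁻ x in Ioi t, F x t := by
  set G : ℝ → ℝ → ℝ≥0∞ := fun x t => if t < x then F x t else 0
  have hG : Measurable (Function.uncurry G) :=
    Measurable.ite (measurableSet_lt measurable_snd measurable_fst) hF measurable_const
  have inner_x : ∀ x ∈ Ioi (0 : ℝ), ∫⁻ t in Ioo 0 x, F x t = ∫⁻ t in Ioi 0, G x t := by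
    intro x _
    rw [← Ioi_inter_Iio, inter_comm, ← Measure.restrict_restrict measurableSet_Iio,
      ← lintegral_indicator measurableSet_Iio]
    rfl
  have inner_t : ∀ t ∈ Ioi (0 : ℝ), ∫⁻ x in Ioi t, F x t = ∫⁻ x in Ioi 0, G x t := by
    intro t ht
    calc ∫⁻ x in Ioi t, F x t = ∫⁻ x in Ioi t ∩ Ioi 0, F x t := by
          rw [inter_eq_self_of_subset_left (Ioi_subset_Ioi (le_of_lt ht))]
      _ = ∫⁻ x in Ioi 0, G x t := by
          rw [← Measure.restrict_restrict measurableSet_Ioi,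
            ← lintegral_indicator measurableSet_Ioi]
          rfl
  rw [setLIntegral_congr_fun measurableSet_Ioi inner_x,
    setLIntegral_congr_fun measurableSet_Ioi inner_t,
    lintegral_lintegral_swap hG.aemeasurable]

lemma lintegral_Ioi_lintegral_Ioo_mul_rpow {g : ℝ → ℝ≥0∞} (hg : Measurable g) {s : ℝ}
    (hs : 0 < s) :
    ∫⁻ x in Ioi 0, (∫⁻ t in Ioo 0 x, g t) * ENNReal.ofReal (x ^ (-s - 1))
      = ENNReal.ofReal s⁻¹ * ∫⁻ t in Ioi 0, g t * ENNReal.ofReal (t ^ (-s)) := by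
  have hF : Measurable (Function.uncurry fun x t : ℝ => g t * ENNReal.ofReal (x ^ (-s - 1))) :=
    (hg.comp measurable_snd).mul (by fun_prop)
  calc ∫⁻ x in Ioi 0, (∫⁻ t in Ioo 0 x, g t) * ENNReal.ofReal (x ^ (-s - 1))
      = ∫⁻ x in Ioi 0, ∫⁻ t in Ioo 0 x, g t * ENNReal.ofReal (x ^ (-s - 1)) := by
        simp_rw [lintegral_mul_const _ hg]
    _ = ∫⁻ t in Ioi 0, ∫⁻ x in Ioi t, g t * ENNReal.ofReal (x ^ (-s - 1)) :=
        lintegral_Ioi_lintegral_Ioo_comm hF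
    _ = ∫⁻ t in Ioi 0, ENNReal.ofReal s⁻¹ * (g t * ENNReal.ofReal (t ^ (-s))) := by
        refine setLIntegral_congr_fun measurableSet_Ioi fun t ht => ?_
        rw [lintegral_const_mul _ (by fun_prop), lintegral_Ioi_ofReal_rpow ht (by linarith),
          sub_add_cancel, neg_neg, div_eq_mul_inv,
          ENNReal.ofReal_mul (Real.rpow_nonneg (le_of_lt ht) _)]
        ring
    _ = ENNReal.ofReal s⁻¹ * ∫⁻ t in Ioi 0, g t * ENNReal.ofReal (t ^ (-s)) :=
        lintegral_const_mul' _ _ ENNReal.ofReal_ne_top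

lemma rpow_lintegral_Ioo_le_mul {p : ℝ} (hp : 1 ≤ p) (β x : ℝ) {f : ℝ → ℝ≥0∞}
    (hf : Measurable f) :
    (∫⁻ t in Ioo 0 x, f t) ^ p ≤
      (∫⁻ t in Ioo 0 x, ENNReal.ofReal (t ^ (-β))) ^ (p - 1) *
        ∫⁻ t in Ioo 0 x, f t ^ p * ENNReal.ofReal (t ^ ((p - 1) * β)) := by
  rcases hp.eq_or_lt with rfl | hp1
  · simp
  have hp0 : 0 < p := by linarith
  set q := p.conjExponent
  have hpq : p.HolderConjugate q := .conjExponent hp1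
  set γ := (p - 1) * β / p
  have hγp : γ * p = (p - 1) * β := div_mul_cancel₀ _ hp0.ne'
  have hγq : -γ * q = -β := by
    simp only [γ, q, Real.conjExponent]; field_simp
  have hqp : 1 / q * p = p - 1 := by
    simp only [q, Real.conjExponent]; field_simp
  have hsplit : ∀ t ∈ Ioo 0 x,
      f t = ((fun t => f t * ENNReal.ofReal (t ^ γ)) * fun t => ENNReal.ofReal (t ^ (-γ))) t := by
    intro t ht
    rw [Pi.mul_apply, mul_assoc, ENNReal.ofReal_rpow_mul_ofReal_rpow ht.1, add_neg_cancel,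
      Real.rpow_zero, ENNReal.ofReal_one, mul_one]
  have hfp : ∀ t ∈ Ioo 0 x,
      (f t * ENNReal.ofReal (t ^ γ)) ^ p = f t ^ p * ENNReal.ofReal (t ^ ((p - 1) * β)) := by
    intro t ht
    rw [ENNReal.mul_rpow_of_nonneg _ _ hp0.le, ENNReal.ofReal_rpow_rpow ht.1, hγp]
  have hwq : ∀ t ∈ Ioo 0 x, ENNReal.ofReal (t ^ (-γ)) ^ q = ENNReal.ofReal (t ^ (-β)) := by
    intro t ht
    rw [ENNReal.ofReal_rpow_rpow ht.1, hγq]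
  calc (∫⁻ t in Ioo 0 x, f t) ^ p
      = (∫⁻ t in Ioo 0 x,
          ((fun t => f t * ENNReal.ofReal (t ^ γ)) * fun t => ENNReal.ofReal (t ^ (-γ))) t) ^ p := by
        rw [setLIntegral_congr_fun measurableSet_Ioo hsplit]
    _ ≤ ((∫⁻ t in Ioo 0 x, (f t * ENNReal.ofReal (t ^ γ)) ^ p) ^ (1 / p) *
          (∫⁻ t in Ioo 0 x, ENNReal.ofReal (t ^ (-γ)) ^ q) ^ (1 / q)) ^ p := by
        gcongr
        exact ENNReal.lintegral_mul_le_Lp_mul_Lq _ hpq (by fun_prop) (by fun_prop)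
    _ = _ := by
        rw [setLIntegral_congr_fun measurableSet_Ioo hfp,
          setLIntegral_congr_fun measurableSet_Ioo hwq, ENNReal.mul_rpow_of_nonneg _ _ hp0.le,
          ← ENNReal.rpow_mul, ← ENNReal.rpow_mul, one_div_mul_cancel hp0.ne', ENNReal.rpow_one,
          hqp, mul_comm]

lemma hardy_integrand_le {p α β x : ℝ} (hp : 1 ≤ p) (hβ : β < 1) (hαβ : α + 1 = p * β)
    (hx : 0 < x) {f : ℝ → ℝ≥0∞} (hf : Measurable f) :
    ((ENNReal.ofReal x)⁻¹ * ∫⁻ t in Ioo 0 x, f t) ^ p * ENNReal.ofReal (x ^ α) ≤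
      ENNReal.ofReal ((1 - β) ^ (1 - p)) *
        ((∫⁻ t in Ioo 0 x, f t ^ p * ENNReal.ofReal (t ^ ((p - 1) * β))) *
          ENNReal.ofReal (x ^ (-(1 - β) - 1))) := by
  have hp0 : 0 < p := by linarith
  have hβ0 : 0 < 1 - β := by linarith
  have hweight :
      (ENNReal.ofReal x)⁻¹ ^ p * ENNReal.ofReal (x ^ α) = ENNReal.ofReal (x ^ (α - p)) := by
    rw [← ENNReal.ofReal_inv_of_pos hx, ← Real.rpow_neg_one, ENNReal.ofReal_rpow_rpow hx,
      ENNReal.ofReal_rpow_mul_ofReal_rpow hx]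
    congr 2
    ring
  have hmass : (∫⁻ t in Ioo 0 x, ENNReal.ofReal (t ^ (-β))) ^ (p - 1)
      = ENNReal.ofReal ((x ^ (1 - β) / (1 - β)) ^ (p - 1)) := by
    rw [lintegral_Ioo_zero_ofReal_rpow hx (by linarith), neg_add_eq_sub,
      ENNReal.ofReal_rpow_of_nonneg (by positivity) (by linarith)]
  have hreal : (x ^ (1 - β) / (1 - β)) ^ (p - 1) * x ^ (α - p)
      = (1 - β) ^ (1 - p) * x ^ (-(1 - β) - 1) := by
    rw [Real.div_rpow (by positivity) hβ0.le, ← Real.rpow_mul hx.le, div_eq_mul_inv,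
      ← Real.rpow_neg hβ0.le, neg_sub, mul_right_comm, ← Real.rpow_add hx, mul_comm]
    congr 2
    linear_combination hαβ
  calc ((ENNReal.ofReal x)⁻¹ * ∫⁻ t in Ioo 0 x, f t) ^ p * ENNReal.ofReal (x ^ α)
      = (∫⁻ t in Ioo 0 x, f t) ^ p * ENNReal.ofReal (x ^ (α - p)) := by
        rw [ENNReal.mul_rpow_of_nonneg _ _ hp0.le, mul_comm _ ((∫⁻ t in Ioo 0 x, f t) ^ p),
          mul_assoc, hweight]
    _ ≤ (∫⁻ t in Ioo 0 x, ENNReal.ofReal (t ^ (-β))) ^ (p - 1) *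
          (∫⁻ t in Ioo 0 x, f t ^ p * ENNReal.ofReal (t ^ ((p - 1) * β))) *
          ENNReal.ofReal (x ^ (α - p)) := by
        gcongr
        exact rpow_lintegral_Ioo_le_mul hp β x hf
    _ = _ := by
        rw [hmass, mul_right_comm, ← ENNReal.ofReal_mul (by positivity), hreal,
          ENNReal.ofReal_mul (by positivity)]
        ring

theorem hardy_weighted (p α : ℝ) (hp : 1 ≤ p) (hα : α < p - 1)
    (f : ℝ → ENNReal) (hf : Measurable f) :
    ∫⁻ x in Ioi (0:ℝ),
        ((ENNReal.ofReal x)⁻¹ * ∫⁻ t in Ioo (0:ℝ) x, f t) ^ p * ENNReal.ofReal (x ^ α)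
      ≤ ENNReal.ofReal ((p / (p - 1 - α)) ^ p) *
          ∫⁻ x in Ioi (0:ℝ), f x ^ p * ENNReal.ofReal (x ^ α) := by
  have hp0 : 0 < p := by linarith
  set β := (1 + α) / p
  have hαβ : α + 1 = p * β := by simp only [β]; field_simp; ring
  have hβ : 1 - β = (p - 1 - α) / p := by simp only [β]; field_simp; ring
  have hβ0 : 0 < 1 - β := by rw [hβ]; exact div_pos (by linarith) hp0
  have hconst : (1 - β) ^ (1 - p) * (1 - β)⁻¹ = (p / (p - 1 - α)) ^ p := by
    rw [← Real.rpow_neg_one, ← Real.rpow_add hβ0, show 1 - p + -1 = -p by ring,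
      Real.rpow_neg hβ0.le, ← Real.inv_rpow hβ0.le, hβ, inv_div]
  have hweight : ∀ t ∈ Ioi (0 : ℝ), f t ^ p * ENNReal.ofReal (t ^ ((p - 1) * β)) *
      ENNReal.ofReal (t ^ (-(1 - β))) = f t ^ p * ENNReal.ofReal (t ^ α) := fun t ht => by
    rw [mul_assoc, ENNReal.ofReal_rpow_mul_ofReal_rpow ht]
    congr 3
    linear_combination -hαβ
  calc _ ≤ ∫⁻ x in Ioi 0, ENNReal.ofReal ((1 - β) ^ (1 - p)) *
          ((∫⁻ t in Ioo 0 x, f t ^ p * ENNReal.ofReal (t ^ ((p - 1) * β))) *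
            ENNReal.ofReal (x ^ (-(1 - β) - 1))) :=
        setLIntegral_mono' measurableSet_Ioi fun x hx =>
          hardy_integrand_le hp (by linarith) hαβ hx hf
    _ = ENNReal.ofReal ((1 - β) ^ (1 - p)) * (ENNReal.ofReal (1 - β)⁻¹ *
          ∫⁻ t in Ioi 0, f t ^ p * ENNReal.ofReal (t ^ ((p - 1) * β)) *
            ENNReal.ofReal (t ^ (-(1 - β)))) := by
        rw [lintegral_const_mul' _ _ ENNReal.ofReal_ne_top,
          lintegral_Ioi_lintegral_Ioo_mul_rpow (by fun_prop) hβ0]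
    _ = _ := by
        rw [setLIntegral_congr_fun measurableSet_Ioi hweight, ← mul_assoc,
          ← ENNReal.ofReal_mul (by positivity), hconst]
end

section
/- Let $1<p<q<\infty$ and define $D_{p,q,\alpha}=\left(\frac{p-1}{p-1-\alpha}\right)^{\frac{1}{p'}+\frac{1}{q}}\left(\frac{p'}{q}\right)^{\frac{1}{p}}\left(\frac{\frac{q-p}{p}\Gamma\left(\frac{pq}{q-p}\right)}{\Gamma\left(\frac{p}{q-p}\right)\Gamma\left(\frac{p(q-1)}{q-p}\right)}\right)^{\frac{1}{p}-\frac{1}{q}}$, where $p'=p/(p-1)$ and $\alpha<p-1$ is fixed. Then $\lim_{q\to p^+} D_{p,q,\alpha} = \frac{p}{p-1-\alpha}$. -/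
open Set Filter Real Asymptotics
open scoped Nat Topology

/-! With `t = pq/(q-p)` and `s = 1/q` the third factor is `(Γ(t) / (Γ(st+1) Γ((1-s)t)))^(1/t)`,
where `t → ∞` and `s → 1/p`. The crude Stirling estimate `log Γ(x) = x log x - x + O(log x)`,
obtained from Stirling's formula for factorials and the monotonicity of `Γ` on `[2, ∞)`, shows
that this `t`-th root of a generalised binomial coefficient tends to
`exp (binEntropy (1/p)) = p^(1/p) p'^(1/p')`. The first factor tends to `(p-1)/(p-1-α)` and the
second to `(p-1)^(-1/p)`, and the product collapses to `p/(p-1-α)`. -/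

lemma log_factorial_le_stirling {n : ℕ} (hn : n ≠ 0) :
    log n ! ≤ n * log n - n + log n / 2 + 1 := by
  have hn₀ : (0 : ℝ) < n := by positivity
  have hseq : Stirling.stirlingSeq n ≤ exp 1 / √2 := by
    obtain ⟨m, rfl⟩ := Nat.exists_eq_succ_of_ne_zero hn
    simpa using Stirling.stirlingSeq'_antitone (Nat.zero_le m)
  have hpos : 0 < Stirling.stirlingSeq n :=
    (sqrt_pos.2 pi_pos).trans_le (Stirling.sqrt_pi_le_stirlingSeq hn)
  have hlog := log_le_log hpos hseq
  rw [Stirling.log_stirlingSeq_formula, log_div (exp_pos 1).ne' (by positivity), log_exp,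
    log_sqrt zero_le_two, log_mul two_ne_zero hn₀.ne', log_div hn₀.ne' (exp_pos 1).ne',
    log_exp] at hlog
  linarith

lemma mul_log_sub_le_log_factorial (n : ℕ) : n * log n - n ≤ log n ! := by
  rcases eq_or_ne n 0 with rfl | hn
  · simp
  have := Stirling.le_log_factorial_stirling hn
  have := log_natCast_nonneg n
  have := log_nonneg (by linarith [pi_gt_three] : 1 ≤ 2 * π)
  linarith

lemma sub_mul_log_le_mul_log_sub_mul_log {x y : ℝ} (hy : 0 < y) (hyx : y ≤ x) :
    (x - y) * log y ≤ (x * log x - x) - (y * log y - y) ∧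
      (x * log x - x) - (y * log y - y) ≤ (x - y) * log x := by
  have hx : 0 < x := hy.trans_le hyx
  have h₁ := log_le_sub_one_of_pos (div_pos hx hy)
  have h₂ := log_le_sub_one_of_pos (div_pos hy hx)
  rw [log_div hx.ne' hy.ne'] at h₁
  rw [log_div hy.ne' hx.ne'] at h₂
  have e₁ : y * (x / y - 1) = x - y := by field_simp
  have e₂ : x * (y / x - 1) = y - x := by field_simp
  constructor <;>
    linarith [mul_le_mul_of_nonneg_left h₁ hy.le, mul_le_mul_of_nonneg_left h₂ hx.le]

noncomputable def stirlingRemainder (x : ℝ) : ℝ := log (Gamma x) - (x * log x - x)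

lemma abs_stirlingRemainder_le {x : ℝ} (hx : 2 ≤ x) :
    |stirlingRemainder x| ≤ 2 * log x + 1 := by
  set n := ⌊x⌋₊
  have hn : (2 : ℝ) ≤ n := by
    exact_mod_cast Nat.le_floor (by exact_mod_cast hx : ((2 : ℕ) : ℝ) ≤ x)
  have hn₀ : (0 : ℝ) < n := by linarith
  have hnx : (n : ℝ) ≤ x := Nat.floor_le (by linarith)
  have hxn : x < n + 1 := Nat.lt_floor_add_one x
  have hGamma_succ : Gamma (n + 1) = n ! := Gamma_nat_eq_factorial n
  have hlogGamma : log (Gamma n) = log n ! - log n := by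
    rw [← hGamma_succ, Gamma_add_one hn₀.ne', log_mul hn₀.ne' (Gamma_pos_of_pos hn₀).ne']
    ring
  have hmono := Gamma_strictMonoOn_Ici.monotoneOn
  have hlo : log (Gamma n) ≤ log (Gamma x) :=
    log_le_log (Gamma_pos_of_pos hn₀) (hmono hn hx hnx)
  have hhi : log (Gamma x) ≤ log n ! := by
    rw [← hGamma_succ]
    exact log_le_log (Gamma_pos_of_pos (by positivity))
      (hmono hx (show (2 : ℝ) ≤ n + 1 by linarith) hxn.le)
  have hf := sub_mul_log_le_mul_log_sub_mul_log hn₀ hnx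
  have hlogn : log n ≤ log x := log_le_log hn₀ hnx
  have : 0 ≤ (x - n) * log n := mul_nonneg (by linarith) (log_nonneg (by linarith))
  have : (x - n) * log x ≤ log x :=
    mul_le_of_le_one_left (log_nonneg (by linarith)) (by linarith)
  have := log_factorial_le_stirling (Nat.floor_pos.2 (by linarith : 1 ≤ x)).ne'
  have := mul_log_sub_le_log_factorial n
  rw [stirlingRemainder, abs_le]
  constructor <;> linarith

lemma isLittleO_stirlingRemainder_id_atTop : stirlingRemainder =o[atTop] id := by
  have hbound : (fun x => 2 * log x + 1) =o[atTop] id :=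
    (isLittleO_log_id_atTop.const_mul_left 2).add (isLittleO_const_id_atTop 1)
  refine (IsBigO.of_bound 1 ?_).trans_isLittleO hbound
  filter_upwards [eventually_ge_atTop 2] with x hx
  rw [one_mul, norm_eq_abs, norm_of_nonneg (by linarith [log_nonneg (by linarith : (1 : ℝ) ≤ x)])]
  exact abs_stirlingRemainder_le hx

lemma log_Gamma_sub_log_Gamma_sub_log_Gamma_eq {s t : ℝ} (hs₀ : 0 < s) (hs₁ : s < 1)
    (ht : 0 < t) :
    log (Gamma t) - log (Gamma (s * t)) - log (Gamma ((1 - s) * t)) =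
      t * binEntropy s + stirlingRemainder t - stirlingRemainder (s * t) -
        stirlingRemainder ((1 - s) * t) := by
  have h1s : 0 < 1 - s := by linarith
  simp only [stirlingRemainder, binEntropy, log_inv, log_mul hs₀.ne' ht.ne',
    log_mul h1s.ne' ht.ne']
  ring

section GammaBinomial

variable {ι : Type*} {l : Filter ι} {s t : ι → ℝ} {s₀ : ℝ}

lemma tendsto_log_Gamma_sub_log_Gamma_sub_log_Gamma_div (hs₀ : s₀ ∈ Ioo 0 1)
    (hs : Tendsto s l (𝓝 s₀)) (ht : Tendsto t l atTop) :
    Tendsto (fun i => (log (Gamma (t i)) - log (Gamma (s i * t i)) -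
      log (Gamma ((1 - s i) * t i))) / t i) l (𝓝 (binEntropy s₀)) := by
  have hR : Tendsto (fun x => stirlingRemainder x / x) atTop (𝓝 0) :=
    isLittleO_stirlingRemainder_id_atTop.tendsto_div_nhds_zero
  have h1s : Tendsto (fun i => 1 - s i) l (𝓝 (1 - s₀)) := tendsto_const_nhds.sub hs
  have hst : Tendsto (fun i => s i * t i) l atTop := hs.pos_mul_atTop hs₀.1 ht
  have h1st : Tendsto (fun i => (1 - s i) * t i) l atTop :=
    h1s.pos_mul_atTop (sub_pos.2 hs₀.2) ht
  have hlim := (((binEntropy_continuous.tendsto s₀).comp hs).add (hR.comp ht)).sub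
    (hs.mul (hR.comp hst)) |>.sub (h1s.mul (hR.comp h1st))
  simp only [mul_zero, add_zero, sub_zero] at hlim
  refine hlim.congr' ?_
  filter_upwards [hs.eventually (Ioo_mem_nhds hs₀.1 hs₀.2), ht.eventually_gt_atTop 0]
    with i ⟨hsi₀, hsi₁⟩ hti
  have : 0 < 1 - s i := by linarith
  rw [log_Gamma_sub_log_Gamma_sub_log_Gamma_eq hsi₀ hsi₁ hti]
  simp only [Function.comp_apply]
  field_simp

lemma tendsto_Gamma_div_Gamma_mul_Gamma_rpow_inv (hs₀ : s₀ ∈ Ioo 0 1)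
    (hs : Tendsto s l (𝓝 s₀)) (ht : Tendsto t l atTop) :
    Tendsto (fun i => (Gamma (t i) / (Gamma (s i * t i + 1) * Gamma ((1 - s i) * t i))) ^ (t i)⁻¹)
      l (𝓝 (exp (binEntropy s₀))) := by
  have hlog_st : Tendsto (fun i => log (s i * t i) / t i) l (𝓝 0) := by
    have hlogt := isLittleO_log_id_atTop.tendsto_div_nhds_zero.comp ht
    have hlogs := ((continuousAt_log hs₀.1.ne').tendsto.comp hs).mul ht.inv_tendsto_atTop
    have hsum := hlogs.add hlogt
    rw [mul_zero, add_zero] at hsum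
    refine hsum.congr' ?_
    filter_upwards [hs.eventually (lt_mem_nhds hs₀.1), ht.eventually_gt_atTop 0] with i hsi hti
    simp only [Function.comp_apply, Pi.inv_apply, id, log_mul hsi.ne' hti.ne']
    field_simp
  have hlim := ((tendsto_log_Gamma_sub_log_Gamma_sub_log_Gamma_div hs₀ hs ht).sub hlog_st).rexp
  rw [sub_zero] at hlim
  refine hlim.congr' ?_
  filter_upwards [hs.eventually (Ioo_mem_nhds hs₀.1 hs₀.2), ht.eventually_gt_atTop 0]
    with i ⟨hsi₀, hsi₁⟩ hti
  have hst : 0 < s i * t i := mul_pos hsi₀ hti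
  have hΓ := Gamma_pos_of_pos hti
  have hΓs := Gamma_pos_of_pos hst
  have hΓ1s := Gamma_pos_of_pos (mul_pos (sub_pos.2 hsi₁) hti)
  rw [Gamma_add_one hst.ne', rpow_def_of_pos (by positivity), log_div hΓ.ne' (by positivity),
    log_mul (by positivity) hΓ1s.ne', log_mul hst.ne' hΓs.ne']
  congr 1
  field_simp
  ring

end GammaBinomial

lemma rpow_mul_exp_binEntropy_inv {p : ℝ} (hp : 1 < p) :
    ((p / (p - 1)) / p) ^ (1 / p) * exp (binEntropy p⁻¹) = p / (p - 1) := by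
  have hp₀ : 0 < p := by linarith
  have hp₁ : 0 < p - 1 := by linarith
  rw [rpow_def_of_pos (by positivity), ← exp_add]
  refine (congrArg exp ?_).trans (exp_log (by positivity : 0 < p / (p - 1)))
  rw [binEntropy, inv_inv, show (1 - p⁻¹)⁻¹ = p / (p - 1) by field_simp,
    show 1 - p⁻¹ = (p - 1) / p by field_simp, show p / (p - 1) / p = (p - 1)⁻¹ by field_simp,
    log_inv, log_div hp₀.ne' hp₁.ne']
  field_simp
  ring

lemma tendsto_Gamma_ratio_rpow_nhdsGT {p : ℝ} (hp : 1 < p) :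
    Tendsto (fun q : ℝ => (((q - p) / p * Gamma (p * q / (q - p))) /
      (Gamma (p / (q - p)) * Gamma (p * (q - 1) / (q - p)))) ^ (1 / p - 1 / q))
      (𝓝[>] p) (𝓝 (exp (binEntropy p⁻¹))) := by
  have hp₀ : 0 < p := by linarith
  have hq : Tendsto (fun q : ℝ => q) (𝓝[>] p) (𝓝 p) := nhdsWithin_le_nhds
  have hsub : Tendsto (fun q : ℝ => q - p) (𝓝[>] p) (𝓝[>] 0) :=
    tendsto_nhdsWithin_of_tendsto_nhds_of_eventually_within _ (by simpa using hq.sub_const p)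
      (eventually_nhdsWithin_of_forall fun q hq => mem_Ioi.2 (sub_pos.2 hq))
  have ht : Tendsto (fun q : ℝ => p * q / (q - p)) (𝓝[>] p) atTop :=
    (tendsto_const_nhds.mul hq).pos_mul_atTop (by positivity) hsub.inv_tendsto_nhdsGT_zero
  refine (tendsto_Gamma_div_Gamma_mul_Gamma_rpow_inv ⟨inv_pos.2 hp₀, inv_lt_one_of_one_lt₀ hp⟩
    (hq.inv₀ hp₀.ne') ht).congr' ?_
  filter_upwards [self_mem_nhdsWithin] with q (hpq : p < q)
  have hq₀ : 0 < q := hp₀.trans hpq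
  have hqp : 0 < q - p := sub_pos.2 hpq
  rw [show q⁻¹ * (p * q / (q - p)) = p / (q - p) by field_simp,
    show (1 - q⁻¹) * (p * q / (q - p)) = p * (q - 1) / (q - p) by field_simp,
    show (p * q / (q - p))⁻¹ = 1 / p - 1 / q by field_simp, Gamma_add_one (by positivity)]
  congr 1
  field_simp

theorem sharp_constant_limit_general (p α : ℝ) (hp : 1 < p) :
    Tendsto (fun q : ℝ =>
        ((p - 1) / (p - 1 - α)) ^ (1 / (p / (p - 1)) + 1 / q) * ((p / (p - 1)) / q) ^ (1 / p) *
          (((q - p) / p * Real.Gamma (p * q / (q - p))) /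
              (Real.Gamma (p / (q - p)) * Real.Gamma (p * (q - 1) / (q - p)))) ^ (1 / p - 1 / q))
      (nhdsWithin p (Ioi p)) (nhds (p / (p - 1 - α))) := by
  have hp₀ : 0 < p := by linarith
  have hq : Tendsto (fun q : ℝ => q) (𝓝[>] p) (𝓝 p) := nhdsWithin_le_nhds
  have h₁ : Tendsto (fun q : ℝ => ((p - 1) / (p - 1 - α)) ^ (1 / (p / (p - 1)) + 1 / q))
      (𝓝[>] p) (𝓝 ((p - 1) / (p - 1 - α))) := by
    have hexp : 1 / (p / (p - 1)) + 1 / p = 1 := by field_simp; ring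
    have := (tendsto_const_nhds (x := (p - 1) / (p - 1 - α))).rpow
      (tendsto_const_nhds.add (tendsto_const_nhds.div hq hp₀.ne')) (Or.inr (hexp ▸ one_pos))
    rwa [hexp, rpow_one] at this
  have h₂ : Tendsto (fun q : ℝ => ((p / (p - 1)) / q) ^ (1 / p)) (𝓝[>] p)
      (𝓝 (((p / (p - 1)) / p) ^ (1 / p))) :=
    (tendsto_const_nhds.div hq hp₀.ne').rpow_const (Or.inr (by positivity))
  have hlim := (h₁.mul h₂).mul (tendsto_Gamma_ratio_rpow_nhdsGT hp)
  rwa [mul_assoc, rpow_mul_exp_binEntropy_inv hp, div_mul_div_cancel₀' (by linarith)] at hlim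

theorem sharp_constant_limit (p α : ℝ) (hp : 1 < p) (hα : α < p - 1) :
    Tendsto (fun q : ℝ =>
        ((p - 1) / (p - 1 - α)) ^ (1 / (p / (p - 1)) + 1 / q) * ((p / (p - 1)) / q) ^ (1 / p) *
          (((q - p) / p * Real.Gamma (p * q / (q - p))) /
              (Real.Gamma (p / (q - p)) * Real.Gamma (p * (q - 1) / (q - p)))) ^ (1 / p - 1 / q))
      (nhdsWithin p (Ioi p)) (nhds (p / (p - 1 - α))) :=
  sharp_constant_limit_general p α hp
end

section
/- Let $n\ge 1$, $1<p\le q<\infty$, and $\alpha,\beta\in\mathbb{R}$ with $\alpha<n(p-1)$ and $q(\alpha+n)-p(\beta+n)=pqn$. Then there exists $C<\infty$ such that for all nonnegative measurable $u$ on $\mathbb{R}^n$, $\left(\int_{\mathbb{R}^n}\left(\int_{|y|<|x|} u(y)\,dy\right)^q |x|^{\beta}\,dx\right)^{1/q} \le C\left(\int_{\mathbb{R}^n} u(x)^p |x|^{\alpha}\,dx\right)^{1/p}$. -/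
/-!
Split `E \ {0}` into the dyadic shells `S k = {2 ^ k ≤ ‖x‖ < 2 ^ (k + 1)}`. Hölder's inequality
on a shell gives `∫_{S k} u ≤ C 2 ^ (k σ) b k`, where `σ = (d (p - 1) - α) / p > 0` and
`b k ^ p = ∫_{S k} u ^ p ‖x‖ ^ α`. For `x ∈ S m` the ball `‖y‖ < ‖x‖` is covered by the shells
`S (m - j)`, `j ≥ 0`, and by the balance condition `β + d = -σ q` the mass
`∫_{S m} ‖x‖ ^ β ≲ 2 ^ (m (β + d))` cancels the factor `2 ^ (m σ q)`. What remains is the discrete convolution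
`∑ m, (∑ j, 2 ^ (-j σ) b (m - j)) ^ q`, which Jensen's inequality and Fubini bound by
`(∑ j, 2 ^ (-j σ)) ^ q ∑ k, b k ^ q`; finally `ℓ^p ⊆ ℓ^q` since `p ≤ q`.
-/

open MeasureTheory Set Metric
open scoped ENNReal

namespace ENNReal

variable {ι : Type*}

theorem rpow_eq_rpow_sub_one_mul {s : ℝ} (hs : 1 ≤ s) (x : ℝ≥0∞) :
    x ^ s = x ^ (s - 1) * x := by
  calc x ^ s = x ^ ((s - 1) + 1) := by rw [sub_add_cancel]
    _ = x ^ (s - 1) * x := by rw [rpow_add_of_nonneg _ _ (by linarith) zero_le_one, rpow_one]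

theorem tsum_rpow_le_rpow_tsum {s : ℝ} (hs : 1 ≤ s) (f : ι → ℝ≥0∞) :
    ∑' i, f i ^ s ≤ (∑' i, f i) ^ s := by
  have hsplit := rpow_eq_rpow_sub_one_mul hs
  calc ∑' i, f i ^ s = ∑' i, f i ^ (s - 1) * f i := by simp only [hsplit]
    _ ≤ ∑' i, (∑' j, f j) ^ (s - 1) * f i := by
        gcongr with i
        exact ENNReal.le_tsum i
    _ = (∑' j, f j) ^ s := by rw [ENNReal.tsum_mul_left, hsplit]

theorem tsum_mul_le_weight_mul_Lp {p : ℝ} (hp : 1 ≤ p) (w f : ι → ℝ≥0∞) :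
    ∑' i, w i * f i ≤ (∑' i, w i) ^ (1 - p⁻¹) * (∑' i, w i * f i ^ p) ^ p⁻¹ := by
  rw [ENNReal.tsum_eq_iSup_sum]
  refine iSup_le fun s => (inner_le_weight_mul_Lp_of_nonneg s hp w f).trans ?_
  have hp' : p⁻¹ ≤ 1 := inv_le_one_of_one_le₀ hp
  gcongr <;> exact ENNReal.sum_le_tsum s

theorem rpow_tsum_mul_le {s : ℝ} (hs : 1 ≤ s) (w f : ι → ℝ≥0∞) :
    (∑' i, w i * f i) ^ s ≤ (∑' i, w i) ^ (s - 1) * ∑' i, w i * f i ^ s := by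
  have hs0 : s ≠ 0 := by positivity
  calc (∑' i, w i * f i) ^ s
      ≤ ((∑' i, w i) ^ (1 - s⁻¹) * (∑' i, w i * f i ^ s) ^ s⁻¹) ^ s := by
        gcongr
        exact tsum_mul_le_weight_mul_Lp hs w f
    _ = (∑' i, w i) ^ (s - 1) * ∑' i, w i * f i ^ s := by
        rw [mul_rpow_of_nonneg _ _ (by positivity), ← rpow_mul, ← rpow_mul,
          inv_mul_cancel₀ hs0, rpow_one, sub_mul, inv_mul_cancel₀ hs0, one_mul]

theorem tsum_rpow_tsum_mul_sub_le {s : ℝ} (hs : 1 ≤ s) (w : ℕ → ℝ≥0∞)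
    (b : ℤ → ℝ≥0∞) :
    ∑' m : ℤ, (∑' j : ℕ, w j * b (m - j)) ^ s ≤ (∑' j, w j) ^ s * ∑' k, b k ^ s := by
  have hshift (j : ℕ) : ∑' m : ℤ, b (m - j) ^ s = ∑' k, b k ^ s :=
    (Equiv.subRight (j : ℤ)).tsum_eq fun k => b k ^ s
  calc ∑' m : ℤ, (∑' j : ℕ, w j * b (m - j)) ^ s
      ≤ ∑' m : ℤ, (∑' j, w j) ^ (s - 1) * ∑' j : ℕ, w j * b (m - j) ^ s :=
        ENNReal.tsum_le_tsum fun m => rpow_tsum_mul_le hs w _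
    _ = (∑' j, w j) ^ (s - 1) * ∑' j : ℕ, w j * ∑' m : ℤ, b (m - j) ^ s := by
        simp only [ENNReal.tsum_mul_left]
        rw [ENNReal.tsum_comm]
        simp only [ENNReal.tsum_mul_left]
    _ = (∑' j, w j) ^ s * ∑' k, b k ^ s := by
        rw [rpow_eq_rpow_sub_one_mul hs, mul_assoc]
        simp only [hshift, ENNReal.tsum_mul_right]

end ENNReal

theorem Real.rpow_le_two_rpow_abs_mul_rpow {a x : ℝ} (c : ℝ) (ha : 0 < a) (hax : a ≤ x)
    (hx : x ≤ 2 * a) : x ^ c ≤ 2 ^ |c| * a ^ c := by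
  rcases le_or_gt 0 c with hc | hc
  · calc x ^ c ≤ (2 * a) ^ c := by gcongr; linarith
      _ = 2 ^ |c| * a ^ c := by rw [abs_of_nonneg hc, Real.mul_rpow zero_le_two ha.le]
  · calc x ^ c ≤ a ^ c := Real.rpow_le_rpow_of_nonpos ha hax hc.le
      _ ≤ 2 ^ |c| * a ^ c :=
        le_mul_of_one_le_left (by positivity) (Real.one_le_rpow one_le_two (abs_nonneg c))

theorem lintegral_le_lintegral_rpow_mul_weight {X : Type*} [MeasurableSpace X] {μ : Measure X}
    {p q : ℝ} (hpq : p.HolderConjugate q) {f w : X → ℝ≥0∞} (hf : AEMeasurable f μ)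
    (hw : AEMeasurable w μ) (hw0 : ∀ᵐ x ∂μ, w x ≠ 0) (hwt : ∀ᵐ x ∂μ, w x ≠ ∞) :
    ∫⁻ x, f x ∂μ ≤
      (∫⁻ x, f x ^ p * w x ∂μ) ^ (1 / p) * (∫⁻ x, w x ^ (-(q / p)) ∂μ) ^ (1 / q) := by
  have hsplit : f =ᵐ[μ] fun x => (f x * w x ^ (1 / p)) * w x ^ (-(1 / p)) := by
    filter_upwards [hw0, hwt] with x hx0 hxt
    rw [mul_assoc, ← ENNReal.rpow_add _ _ hx0 hxt, add_neg_cancel, ENNReal.rpow_zero, mul_one]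
  calc ∫⁻ x, f x ∂μ = ∫⁻ x, (f x * w x ^ (1 / p)) * w x ^ (-(1 / p)) ∂μ :=
        lintegral_congr_ae hsplit
    _ ≤ (∫⁻ x, (f x * w x ^ (1 / p)) ^ p ∂μ) ^ (1 / p) *
          (∫⁻ x, (w x ^ (-(1 / p))) ^ q ∂μ) ^ (1 / q) :=
      ENNReal.lintegral_mul_le_Lp_mul_Lq μ hpq (hf.mul (hw.pow_const _)) (hw.pow_const _)
    _ = (∫⁻ x, f x ^ p * w x ∂μ) ^ (1 / p) * (∫⁻ x, w x ^ (-(q / p)) ∂μ) ^ (1 / q) := by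
      simp only [ENNReal.mul_rpow_of_nonneg _ _ hpq.nonneg, ← ENNReal.rpow_mul,
        one_div_mul_cancel hpq.ne_zero, ENNReal.rpow_one]
      congr 4 with x
      ring_nf

def dyadicShell {E : Type*} [Norm E] (k : ℤ) : Set E :=
  {x | (2 : ℝ) ^ k ≤ ‖x‖ ∧ ‖x‖ < 2 ^ (k + 1)}

section dyadicShell

variable {E : Type*} [NormedAddCommGroup E]

theorem measurableSet_dyadicShell [MeasurableSpace E] [OpensMeasurableSpace E] (k : ℤ) :
    MeasurableSet (dyadicShell k : Set E) :=
  measurable_norm measurableSet_Ico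

theorem pairwise_disjoint_dyadicShell :
    Pairwise (Function.onFun Disjoint (dyadicShell (E := E))) := by
  refine pairwise_disjoint_on _ |>.2 fun k l hkl => disjoint_left.2 ?_
  rintro x ⟨-, hxk⟩ ⟨hxl, -⟩
  have : (2 : ℝ) ^ (k + 1) ≤ 2 ^ l := zpow_le_zpow_right₀ one_le_two hkl
  linarith

theorem norm_pos_of_mem_dyadicShell {k : ℤ} {x : E} (hx : x ∈ dyadicShell k) : 0 < ‖x‖ :=
  (zpow_pos two_pos k).trans_le hx.1

theorem iUnion_dyadicShell : ⋃ k, (dyadicShell k : Set E) = {0}ᶜ := by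
  ext x
  simp only [mem_iUnion, mem_compl_singleton_iff, ← norm_pos_iff]
  exact ⟨fun ⟨_, hk⟩ => norm_pos_of_mem_dyadicShell hk,
    fun hx => exists_mem_Ico_zpow hx one_lt_two⟩

theorem setOf_norm_lt_subset_iUnion_dyadicShell (m : ℤ) :
    {y : E | ‖y‖ < 2 ^ (m + 1)} ⊆ {0} ∪ ⋃ j : ℕ, dyadicShell (m - j) := by
  intro y hy
  rcases eq_or_ne y 0 with rfl | hy0
  · exact Or.inl rfl
  have : y ∈ ⋃ k, (dyadicShell k : Set E) := by rwa [iUnion_dyadicShell]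
  obtain ⟨k, hk⟩ := mem_iUnion.1 this
  have hkm : k ≤ m := by
    have : (2 : ℝ) ^ k < 2 ^ (m + 1) := hk.1.trans_lt hy
    have := (zpow_lt_zpow_iff_right₀ one_lt_two).1 this
    omega
  refine Or.inr (mem_iUnion.2 ⟨(m - k).toNat, ?_⟩)
  rwa [Int.toNat_of_nonneg (by omega), sub_sub_cancel]

variable [MeasurableSpace E] (μ : Measure E) [NullSingletonClass μ]

theorem lintegral_eq_tsum_setLIntegral_dyadicShell [OpensMeasurableSpace E] (f : E → ℝ≥0∞) :
    ∫⁻ x, f x ∂μ = ∑' k, ∫⁻ x in dyadicShell k, f x ∂μ := by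
  rw [← lintegral_iUnion measurableSet_dyadicShell pairwise_disjoint_dyadicShell,
    iUnion_dyadicShell, restrict_compl_singleton]

theorem setLIntegral_norm_lt_le_tsum_dyadicShell {m : ℤ} {x : E}
    (hx : x ∈ dyadicShell m) (u : E → ℝ≥0∞) :
    ∫⁻ y in {y | ‖y‖ < ‖x‖}, u y ∂μ ≤ ∑' j : ℕ, ∫⁻ y in dyadicShell (m - j), u y ∂μ := by
  have hsub : {y : E | ‖y‖ < ‖x‖} ⊆ {0} ∪ ⋃ j : ℕ, dyadicShell (m - j) :=
    fun y hy => setOf_norm_lt_subset_iUnion_dyadicShell m (lt_trans hy hx.2)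
  calc ∫⁻ y in {y | ‖y‖ < ‖x‖}, u y ∂μ
      ≤ ∫⁻ y in {0} ∪ ⋃ j : ℕ, dyadicShell (m - j), u y ∂μ := lintegral_mono_set hsub
    _ ≤ ∫⁻ y in {0}, u y ∂μ + ∫⁻ y in ⋃ j : ℕ, dyadicShell (m - j), u y ∂μ :=
      lintegral_union_le _ _ _
    _ ≤ ∑' j : ℕ, ∫⁻ y in dyadicShell (m - j), u y ∂μ := by
      rw [setLIntegral_measure_zero _ _ (measure_singleton 0), zero_add]
      exact lintegral_iUnion_le _ _

end dyadicShell

section AddHaar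

variable {E : Type*} [NormedAddCommGroup E] [NormedSpace ℝ E] [FiniteDimensional ℝ E]
  [MeasurableSpace E] [BorelSpace E] (μ : Measure E) [μ.IsAddHaarMeasure]

theorem setLIntegral_dyadicShell_norm_rpow_le (c : ℝ) (k : ℤ) :
    ∫⁻ x in dyadicShell k, ENNReal.ofReal (‖x‖ ^ c) ∂μ ≤
      ENNReal.ofReal (2 ^ (|c| + Module.finrank ℝ E)) * μ (ball 0 1) *
        ENNReal.ofReal (2 ^ (k * (c + Module.finrank ℝ E))) := by
  set d := Module.finrank ℝ E
  have key : 2 ^ |c| * ((2 : ℝ) ^ k) ^ c * (2 * 2 ^ k) ^ d =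
      2 ^ (|c| + d) * 2 ^ (k * (c + d)) := by
    rw [← Real.rpow_intCast, ← Real.rpow_natCast, ← Real.rpow_mul zero_le_two,
      Real.mul_rpow zero_le_two (by positivity), ← Real.rpow_mul zero_le_two]
    simp only [← Real.rpow_add two_pos]
    ring_nf
  set a : ℝ := 2 ^ k
  have ha : 0 < a := zpow_pos two_pos k
  have hsub : (dyadicShell k : Set E) ⊆ ball 0 (2 * a) := fun x hx => by
    rw [mem_ball_zero_iff, mul_comm, ← zpow_add_one₀ two_ne_zero]
    exact hx.2
  calc ∫⁻ x in dyadicShell k, ENNReal.ofReal (‖x‖ ^ c) ∂μ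
      ≤ ∫⁻ _ in dyadicShell k, ENNReal.ofReal (2 ^ |c| * a ^ c) ∂μ :=
        setLIntegral_mono measurable_const fun x hx => ENNReal.ofReal_le_ofReal <|
          Real.rpow_le_two_rpow_abs_mul_rpow c ha hx.1 <| by
            rw [mul_comm, ← zpow_add_one₀ two_ne_zero]; exact hx.2.le
    _ = ENNReal.ofReal (2 ^ |c| * a ^ c) * μ (dyadicShell k) := setLIntegral_const _ _
    _ ≤ ENNReal.ofReal (2 ^ |c| * a ^ c) * μ (ball 0 (2 * a)) := by gcongr
    _ = ENNReal.ofReal (2 ^ (|c| + d)) * μ (ball 0 1) *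
          ENNReal.ofReal (2 ^ (k * (c + d))) := by
      rw [Measure.addHaar_ball_of_pos μ _ (by positivity), ← mul_assoc,
        ← ENNReal.ofReal_mul (by positivity), key, ENNReal.ofReal_mul (by positivity)]
      ring

theorem exists_setLIntegral_dyadicShell_le {p α : ℝ} (hp : 1 < p) :
    ∃ C : ℝ≥0∞, C ≠ ∞ ∧ ∀ u : E → ℝ≥0∞, AEMeasurable u μ → ∀ k : ℤ,
      ∫⁻ y in dyadicShell k, u y ∂μ ≤
        C * ENNReal.ofReal (2 ^ (k * ((Module.finrank ℝ E * (p - 1) - α) / p))) *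
          (∫⁻ y in dyadicShell k, u y ^ p * ENNReal.ofReal (‖y‖ ^ α) ∂μ) ^ (1 / p) := by
  set d := Module.finrank ℝ E
  set q := p.conjExponent
  have hpq : p.HolderConjugate q := .conjExponent hp
  have hq : 0 ≤ 1 / q := one_div_nonneg.2 hpq.symm.nonneg
  set c := α * -(q / p)
  refine ⟨(ENNReal.ofReal (2 ^ (|c| + d)) * μ (ball 0 1)) ^ (1 / q),
    ENNReal.rpow_ne_top_of_nonneg hq (by finiteness), fun u hu k => ?_⟩
  have hS := measurableSet_dyadicShell (E := E) k
  have hw0 : ∀ᵐ y ∂μ.restrict (dyadicShell k), ENNReal.ofReal (‖y‖ ^ α) ≠ 0 :=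
    ae_restrict_of_forall_mem hS fun y hy =>
      (ENNReal.ofReal_pos.2 (Real.rpow_pos_of_pos (norm_pos_of_mem_dyadicShell hy) α)).ne'
  have hweight : ∫⁻ y in dyadicShell k, ENNReal.ofReal (‖y‖ ^ α) ^ (-(q / p)) ∂μ =
      ∫⁻ y in dyadicShell k, ENNReal.ofReal (‖y‖ ^ c) ∂μ := by
    refine setLIntegral_congr_fun hS fun y hy => ?_
    rw [ENNReal.ofReal_rpow_of_pos (Real.rpow_pos_of_pos (norm_pos_of_mem_dyadicShell hy) α),
      ← Real.rpow_mul (norm_nonneg y)]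
  have hexp : k * (c + d) * (1 / q) = k * ((d * (p - 1) - α) / p) := by
    have hp1 : p - 1 ≠ 0 := by linarith
    simp only [c, q, Real.conjExponent]
    field_simp
    ring
  calc ∫⁻ y in dyadicShell k, u y ∂μ
      ≤ (∫⁻ y in dyadicShell k, u y ^ p * ENNReal.ofReal (‖y‖ ^ α) ∂μ) ^ (1 / p) *
          (∫⁻ y in dyadicShell k, ENNReal.ofReal (‖y‖ ^ α) ^ (-(q / p)) ∂μ) ^ (1 / q) :=
      lintegral_le_lintegral_rpow_mul_weight hpq hu.restrict (by fun_prop) hw0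
        (ae_of_all _ fun _ => ENNReal.ofReal_ne_top)
    _ ≤ (∫⁻ y in dyadicShell k, u y ^ p * ENNReal.ofReal (‖y‖ ^ α) ∂μ) ^ (1 / p) *
          (ENNReal.ofReal (2 ^ (|c| + d)) * μ (ball 0 1) *
            ENNReal.ofReal (2 ^ (k * (c + d)))) ^ (1 / q) := by
      rw [hweight]
      exact mul_le_mul_right
        (ENNReal.rpow_le_rpow (setLIntegral_dyadicShell_norm_rpow_le μ c k) hq) _
    _ = _ := by
      rw [ENNReal.mul_rpow_of_nonneg _ _ hq, ENNReal.ofReal_rpow_of_pos (by positivity),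
        ← Real.rpow_mul zero_le_two, hexp]
      ring

theorem setLIntegral_dyadicShell_hardy_le [Nontrivial E] {σ q β : ℝ} (hq : 0 < q)
    (hβ : β + Module.finrank ℝ E = -(σ * q)) {C : ℝ≥0∞} {u : E → ℝ≥0∞} {b : ℤ → ℝ≥0∞}
    (hu : ∀ k : ℤ, ∫⁻ y in dyadicShell k, u y ∂μ ≤ C * ENNReal.ofReal (2 ^ (k * σ)) * b k)
    (m : ℤ) :
    ∫⁻ x in dyadicShell m,
        (∫⁻ y in {y | ‖y‖ < ‖x‖}, u y ∂μ) ^ q * ENNReal.ofReal (‖x‖ ^ β) ∂μ ≤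
      C ^ q * (ENNReal.ofReal (2 ^ (|β| + Module.finrank ℝ E)) * μ (ball 0 1)) *
        (∑' j : ℕ, ENNReal.ofReal (2 ^ (-σ)) ^ j * b (m - j)) ^ q := by
  set d := Module.finrank ℝ E
  set r := ENNReal.ofReal (2 ^ (-σ))
  set M := ENNReal.ofReal (2 ^ (|β| + d)) * μ (ball 0 1)
  set t := ENNReal.ofReal (2 ^ (m * σ))
  set S := ∑' j : ℕ, r ^ j * b (m - j)
  have hshift (j : ℕ) : ENNReal.ofReal (2 ^ (((m - j : ℤ) : ℝ) * σ)) = t * r ^ j := by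
    rw [← ENNReal.ofReal_pow (by positivity), ← ENNReal.ofReal_mul (by positivity),
      ← Real.rpow_natCast, ← Real.rpow_mul zero_le_two, ← Real.rpow_add two_pos]
    push_cast
    ring_nf
  have hinner :
      ∀ x ∈ (dyadicShell m : Set E), ∫⁻ y in {y | ‖y‖ < ‖x‖}, u y ∂μ ≤ C * t * S := by
    intro x hx
    calc ∫⁻ y in {y | ‖y‖ < ‖x‖}, u y ∂μ
        ≤ ∑' j : ℕ, ∫⁻ y in dyadicShell (m - j), u y ∂μ :=
          setLIntegral_norm_lt_le_tsum_dyadicShell μ hx u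
      _ ≤ ∑' j : ℕ, C * (t * r ^ j) * b (m - j) :=
          ENNReal.tsum_le_tsum fun j => (hu (m - j)).trans_eq (by rw [hshift])
      _ = C * t * S := by
          rw [← ENNReal.tsum_mul_left]
          congr with j
          ring
  have hcancel : t ^ q * ENNReal.ofReal (2 ^ (m * (β + d))) = 1 := by
    rw [hβ, ENNReal.ofReal_rpow_of_pos (by positivity), ← ENNReal.ofReal_mul (by positivity),
      ← Real.rpow_mul zero_le_two, ← Real.rpow_add two_pos]
    ring_nf
    simp
  calc ∫⁻ x in dyadicShell m,
        (∫⁻ y in {y | ‖y‖ < ‖x‖}, u y ∂μ) ^ q * ENNReal.ofReal (‖x‖ ^ β) ∂μ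
      ≤ ∫⁻ x in dyadicShell m, (C * t * S) ^ q * ENNReal.ofReal (‖x‖ ^ β) ∂μ :=
        setLIntegral_mono (by fun_prop) fun x hx => by gcongr; exact hinner x hx
    _ = (C * t * S) ^ q * ∫⁻ x in dyadicShell m, ENNReal.ofReal (‖x‖ ^ β) ∂μ :=
        lintegral_const_mul _ (by fun_prop)
    _ ≤ (C * t * S) ^ q * (M * ENNReal.ofReal (2 ^ (m * (β + d)))) := by
        gcongr
        exact setLIntegral_dyadicShell_norm_rpow_le μ β m
    _ = C ^ q * M * S ^ q * (t ^ q * ENNReal.ofReal (2 ^ (m * (β + d)))) := by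
        rw [ENNReal.mul_rpow_of_nonneg _ _ hq.le, ENNReal.mul_rpow_of_nonneg _ _ hq.le]
        ring
    _ = C ^ q * M * S ^ q := by rw [hcancel, mul_one]

theorem lintegral_hardy_le_of_dyadicShell [Nontrivial E] {p q σ α β : ℝ}
    (hp : 1 ≤ p) (hpq : p ≤ q) (hβ : β + Module.finrank ℝ E = -(σ * q)) {C : ℝ≥0∞}
    {u : E → ℝ≥0∞}
    (hu : ∀ k : ℤ, ∫⁻ y in dyadicShell k, u y ∂μ ≤ C * ENNReal.ofReal (2 ^ (k * σ)) *
      (∫⁻ y in dyadicShell k, u y ^ p * ENNReal.ofReal (‖y‖ ^ α) ∂μ) ^ (1 / p)) :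
    ∫⁻ x, (∫⁻ y in {y | ‖y‖ < ‖x‖}, u y ∂μ) ^ q * ENNReal.ofReal (‖x‖ ^ β) ∂μ ≤
      C ^ q * (ENNReal.ofReal (2 ^ (|β| + Module.finrank ℝ E)) * μ (ball 0 1)) *
        (∑' j : ℕ, ENNReal.ofReal (2 ^ (-σ)) ^ j) ^ q *
          (∫⁻ x, u x ^ p * ENNReal.ofReal (‖x‖ ^ α) ∂μ) ^ (q / p) := by
  set M := ENNReal.ofReal (2 ^ (|β| + Module.finrank ℝ E)) * μ (ball 0 1)
  set r := ENNReal.ofReal (2 ^ (-σ))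
  set B : ℤ → ℝ≥0∞ :=
    fun k => ∫⁻ y in dyadicShell k, u y ^ p * ENNReal.ofReal (‖y‖ ^ α) ∂μ
  calc ∫⁻ x, (∫⁻ y in {y | ‖y‖ < ‖x‖}, u y ∂μ) ^ q * ENNReal.ofReal (‖x‖ ^ β) ∂μ
      = ∑' m : ℤ, ∫⁻ x in dyadicShell m,
          (∫⁻ y in {y | ‖y‖ < ‖x‖}, u y ∂μ) ^ q * ENNReal.ofReal (‖x‖ ^ β) ∂μ :=
        lintegral_eq_tsum_setLIntegral_dyadicShell μ _
    _ ≤ ∑' m : ℤ, C ^ q * M * (∑' j : ℕ, r ^ j * B (m - j) ^ (1 / p)) ^ q :=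
        ENNReal.tsum_le_tsum <| setLIntegral_dyadicShell_hardy_le μ (by linarith) hβ hu
    _ ≤ C ^ q * M * ((∑' j : ℕ, r ^ j) ^ q * ∑' k, (B k ^ (1 / p)) ^ q) := by
        rw [ENNReal.tsum_mul_left]
        gcongr
        exact ENNReal.tsum_rpow_tsum_mul_sub_le (by linarith) _ _
    _ = C ^ q * M * (∑' j : ℕ, r ^ j) ^ q * ∑' k, B k ^ (q / p) := by
        simp only [← ENNReal.rpow_mul, one_div_mul_eq_div]
        ring
    _ ≤ C ^ q * M * (∑' j : ℕ, r ^ j) ^ q * (∑' k, B k) ^ (q / p) := by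
        gcongr
        exact ENNReal.tsum_rpow_le_rpow_tsum ((one_le_div (by linarith)).2 hpq) B
    _ = C ^ q * M * (∑' j : ℕ, r ^ j) ^ q *
          (∫⁻ x, u x ^ p * ENNReal.ofReal (‖x‖ ^ α) ∂μ) ^ (q / p) := by
        rw [lintegral_eq_tsum_setLIntegral_dyadicShell μ]

theorem hardy_inequality [Nontrivial E] {p q α β : ℝ} (hp : 1 < p) (hpq : p ≤ q)
    (hα : α < Module.finrank ℝ E * (p - 1))
    (hrel : q * (α + Module.finrank ℝ E) - p * (β + Module.finrank ℝ E) =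
      p * q * Module.finrank ℝ E) :
    ∃ C : ℝ≥0∞, C ≠ ∞ ∧ ∀ u : E → ℝ≥0∞, AEMeasurable u μ →
      (∫⁻ x, (∫⁻ y in {y | ‖y‖ < ‖x‖}, u y ∂μ) ^ q * ENNReal.ofReal (‖x‖ ^ β) ∂μ) ^ (1 / q) ≤
        C * (∫⁻ x, u x ^ p * ENNReal.ofReal (‖x‖ ^ α) ∂μ) ^ (1 / p) := by
  set d := Module.finrank ℝ E
  set σ := (d * (p - 1) - α) / p
  have hp0 : 0 < p := by linarith
  have hq0 : 0 < q := by linarith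
  have hσ : 0 < σ := div_pos (by linarith) hp0
  have hβ : β + d = -(σ * q) := by
    simp only [σ]
    field_simp
    linear_combination -hrel
  obtain ⟨C, hC, hshell⟩ := exists_setLIntegral_dyadicShell_le μ (α := α) hp
  set r := ENNReal.ofReal (2 ^ (-σ))
  have hr : r < 1 := ENNReal.ofReal_lt_one.2 <|
    Real.rpow_lt_one_of_one_lt_of_neg one_lt_two (neg_neg_of_pos hσ)
  have hG : ∑' j : ℕ, r ^ j ≠ ∞ := by
    rw [ENNReal.tsum_geometric]
    exact ENNReal.inv_ne_top.2 (tsub_pos_of_lt hr).ne'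
  set K := C ^ q * (ENNReal.ofReal (2 ^ (|β| + d)) * μ (ball 0 1)) * (∑' j : ℕ, r ^ j) ^ q
  refine ⟨K ^ (1 / q), by finiteness, fun u hu => ?_⟩
  calc (∫⁻ x, (∫⁻ y in {y | ‖y‖ < ‖x‖}, u y ∂μ) ^ q * ENNReal.ofReal (‖x‖ ^ β) ∂μ) ^ (1 / q)
      ≤ (K * (∫⁻ x, u x ^ p * ENNReal.ofReal (‖x‖ ^ α) ∂μ) ^ (q / p)) ^ (1 / q) := by
        gcongr
        exact lintegral_hardy_le_of_dyadicShell μ hp.le hpq hβ (hshell u hu)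
    _ = K ^ (1 / q) * (∫⁻ x, u x ^ p * ENNReal.ofReal (‖x‖ ^ α) ∂μ) ^ (1 / p) := by
        rw [ENNReal.mul_rpow_of_nonneg _ _ (by positivity), ← ENNReal.rpow_mul]
        congr 2
        field_simp

end AddHaar

theorem hardy_euclidean (n : ℕ) (hn : 1 ≤ n) (p q α β : ℝ) (hp : 1 < p) (hpq : p ≤ q)
    (hα : α < n * (p - 1)) (hrel : q * (α + n) - p * (β + n) = p * q * n) :
    ∃ C : ENNReal, C ≠ ⊤ ∧ ∀ u : EuclideanSpace ℝ (Fin n) → ENNReal, Measurable u →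
      (∫⁻ x : EuclideanSpace ℝ (Fin n), (∫⁻ y in {y : EuclideanSpace ℝ (Fin n) | ‖y‖ < ‖x‖}, u y) ^ q * ENNReal.ofReal (‖x‖ ^ β)) ^ (1/q)
        ≤ C * (∫⁻ x, u x ^ p * ENNReal.ofReal (‖x‖ ^ α)) ^ (1/p) := by
  have : Nonempty (Fin n) := ⟨⟨0, hn⟩⟩
  have hd : Module.finrank ℝ (EuclideanSpace ℝ (Fin n)) = n := finrank_euclideanSpace_fin
  obtain ⟨C, hC, hardy⟩ := hardy_inequality volume hp hpq (by rwa [hd]) (by rwa [hd])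
  exact ⟨C, hC, fun u hu => hardy u hu.aemeasurable⟩
end

section
/- Let $n\ge 1$, $p>1$, and $\alpha<n(p-1)$; set $\beta = \alpha - pn$. Then for all nonnegative measurable $u$ on $\mathbb{R}^n$, $\left(\int_{\mathbb{R}^n}\left(\int_{|y|<|x|} u(y)\,dy\right)^p |x|^{\alpha-pn}\,dx\right)^{1/p} \le \frac{p\,\omega_{n-1}}{n(p-1)-\alpha}\left(\int_{\mathbb{R}^n} u(x)^p |x|^{\alpha}\,dx\right)^{1/p}$, where $\omega_{n-1}$ is the surface measure of the unit sphere in $\mathbb{R}^n$. -/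
open MeasureTheory Set Metric
open scoped ENNReal NNReal

noncomputable section

/-- The surface measure of the unit sphere `S^{n-1}` in `ℝⁿ`. -/
noncomputable def sphereArea (n : ℕ) : ℝ :=
  ((volume : Measure (EuclideanSpace ℝ (Fin n))).toSphere univ).toReal

variable {n : ℕ}


lemma polar_lintegral (hn : 1 ≤ n) (f : ℝ → ENNReal) (hf : Measurable f) :
    ∫⁻ x : EuclideanSpace ℝ (Fin n), f ‖x‖ =
      (volume : Measure (EuclideanSpace ℝ (Fin n))).toSphere univ *
        ∫⁻ r in Ioi (0:ℝ), ENNReal.ofReal (r ^ (n-1)) * f r := by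
  haveI : Nontrivial (EuclideanSpace ℝ (Fin n)) := by
    have : Module.finrank ℝ (EuclideanSpace ℝ (Fin n)) = n := finrank_euclideanSpace_fin
    exact Module.nontrivial_of_finrank_pos (R := ℝ) (by omega : 0 < Module.finrank ℝ (EuclideanSpace ℝ (Fin n)))
  set μ : Measure (EuclideanSpace ℝ (Fin n)) := volume
  have hdim : Module.finrank ℝ (EuclideanSpace ℝ (Fin n)) = n := finrank_euclideanSpace_fin
  calc ∫⁻ x, f ‖x‖ ∂μ
      = ∫⁻ x : ({0}ᶜ : Set (EuclideanSpace ℝ (Fin n))), f ‖x.1‖ ∂(μ.comap Subtype.val) := by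
        rw [lintegral_subtype_comap (measurableSet_singleton (0 : EuclideanSpace ℝ (Fin n))).compl
          (fun x => f ‖x‖),
          restrict_compl_singleton]
    _ = ∫⁻ z : sphere (0 : EuclideanSpace ℝ (Fin n)) 1 × Ioi (0:ℝ), f z.2
          ∂(μ.toSphere.prod (.volumeIoiPow (Module.finrank ℝ (EuclideanSpace ℝ (Fin n)) - 1))) := by
        rw [← (μ.measurePreserving_homeomorphUnitSphereProd).lintegral_comp_emb
          (Homeomorph.measurableEmbedding _) (fun z => f z.2)]
        refine lintegral_congr fun x => ?_
        simp
    _ = μ.toSphere univ * ∫⁻ r in Ioi (0:ℝ), ENNReal.ofReal (r ^ (n-1)) * f r := by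
        rw [hdim]
        have hmeas : AEMeasurable
            (fun z : ↥(sphere (0 : EuclideanSpace ℝ (Fin n)) 1) × ↥(Ioi (0:ℝ)) => f z.2.1)
            (μ.toSphere.prod (Measure.volumeIoiPow (n-1))) :=
          (hf.comp (measurable_subtype_coe.comp measurable_snd)).aemeasurable
        rw [lintegral_prod _ hmeas]
        simp only [lintegral_const]
        have h2 : Measurable (fun r : ↥(Ioi (0:ℝ)) => f r.1) := hf.comp measurable_subtype_coe
        rw [Measure.volumeIoiPow, lintegral_withDensity_eq_lintegral_mul _
          ((measurable_subtype_coe.pow_const _).ennreal_ofReal) h2]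
        rw [mul_comm]
        congr 1
        rw [← lintegral_subtype_comap measurableSet_Ioi
          (fun r : ℝ => ENNReal.ofReal (r ^ (n-1)) * f r)]
        rfl

lemma lint_ball (hn : 1 ≤ n) (t R : ℝ) (ht : 0 < (n:ℝ) + t) (hR : 0 ≤ R) :
    ∫⁻ x : EuclideanSpace ℝ (Fin n) in {x | ‖x‖ < R}, ENNReal.ofReal (‖x‖ ^ t) =
      (volume : Measure (EuclideanSpace ℝ (Fin n))).toSphere univ *
        ENNReal.ofReal (R ^ ((n:ℝ) + t) / ((n:ℝ) + t)) := by
  have hfm : Measurable fun r : ℝ => ENNReal.ofReal (r ^ t) := by fun_prop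
  have hind : Measurable fun r : ℝ => (Iio R).indicator (fun r => ENNReal.ofReal (r ^ t)) r :=
    hfm.indicator measurableSet_Iio
  have hset : MeasurableSet {x : EuclideanSpace ℝ (Fin n) | ‖x‖ < R} :=
    measurable_norm measurableSet_Iio
  have h1 : ∫⁻ x : EuclideanSpace ℝ (Fin n) in {x | ‖x‖ < R}, ENNReal.ofReal (‖x‖ ^ t) =
      ∫⁻ x : EuclideanSpace ℝ (Fin n), (Iio R).indicator (fun r => ENNReal.ofReal (r ^ t)) ‖x‖ := by
    rw [← lintegral_indicator hset]
    refine lintegral_congr fun x => ?_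
    by_cases h : ‖x‖ < R <;> simp [Set.indicator, h]
  rw [h1, polar_lintegral hn _ hind]
  congr 1
  have h2 : ∀ r : ℝ, ENNReal.ofReal (r ^ (n-1)) * (Iio R).indicator
        (fun r => ENNReal.ofReal (r ^ t)) r =
      (Iio R).indicator (fun r => ENNReal.ofReal (r ^ (n-1)) * ENNReal.ofReal (r ^ t)) r := by
    intro r; by_cases h : r < R <;> simp [Set.indicator, h]
  rw [lintegral_congr h2, lintegral_indicator measurableSet_Iio, Measure.restrict_restrict
    measurableSet_Iio]
  have h3 : Iio R ∩ Ioi 0 = Ioo 0 R := by ext r; simp [mem_Ioo, and_comm]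
  rw [h3]
  have h4 : ∫⁻ r in Ioo (0:ℝ) R, ENNReal.ofReal (r ^ (n-1)) * ENNReal.ofReal (r ^ t) =
      ∫⁻ r in Ioo (0:ℝ) R, ENNReal.ofReal (r ^ ((n:ℝ) - 1 + t)) := by
    refine setLIntegral_congr_fun measurableSet_Ioo (fun r hr => ?_)
    rw [← ENNReal.ofReal_mul (pow_nonneg hr.1.le _)]
    congr 1
    rw [← Real.rpow_natCast r (n-1), ← Real.rpow_add hr.1]
    congr 1
    push_cast [Nat.cast_sub hn]
    ring
  have hint : IntegrableOn (fun r : ℝ => r ^ ((n:ℝ) - 1 + t)) (Ioo 0 R) :=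
    ((intervalIntegral.intervalIntegrable_rpow' (by linarith)).1).mono_set Ioo_subset_Ioc_self
  rw [h4, ← ofReal_integral_eq_lintegral_ofReal hint]
  · congr 1
    rw [← integral_Ioc_eq_integral_Ioo, ← intervalIntegral.integral_of_le hR,
      integral_rpow (Or.inl (by linarith))]
    rw [Real.zero_rpow (by linarith : (n:ℝ) - 1 + t + 1 ≠ 0)]
    have he : (n:ℝ) - 1 + t + 1 = (n:ℝ) + t := by ring
    rw [he, sub_zero]
  · filter_upwards [ae_restrict_mem measurableSet_Ioo] with r hr
    exact Real.rpow_nonneg hr.1.le _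

lemma lint_compl (hn : 1 ≤ n) (t R : ℝ) (ht : (n:ℝ) + t < 0) (hR : 0 < R) :
    ∫⁻ x : EuclideanSpace ℝ (Fin n) in {x | R < ‖x‖}, ENNReal.ofReal (‖x‖ ^ t) =
      (volume : Measure (EuclideanSpace ℝ (Fin n))).toSphere univ *
        ENNReal.ofReal (R ^ ((n:ℝ) + t) / (-((n:ℝ) + t))) := by
  have hind : Measurable fun r : ℝ => (Ioi R).indicator (fun r => ENNReal.ofReal (r ^ t)) r := by
    have : Measurable fun r : ℝ => ENNReal.ofReal (r ^ t) := by fun_prop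
    exact this.indicator measurableSet_Ioi
  have hset : MeasurableSet {x : EuclideanSpace ℝ (Fin n) | R < ‖x‖} :=
    measurable_norm measurableSet_Ioi
  have h1 : ∫⁻ x : EuclideanSpace ℝ (Fin n) in {x | R < ‖x‖}, ENNReal.ofReal (‖x‖ ^ t) =
      ∫⁻ x : EuclideanSpace ℝ (Fin n), (Ioi R).indicator (fun r => ENNReal.ofReal (r ^ t)) ‖x‖ := by
    rw [← lintegral_indicator hset]
    refine lintegral_congr fun x => ?_
    by_cases h : R < ‖x‖ <;> simp [Set.indicator, h]
  rw [h1, polar_lintegral hn _ hind]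
  congr 1
  have h2 : ∀ r : ℝ, ENNReal.ofReal (r ^ (n-1)) * (Ioi R).indicator
        (fun r => ENNReal.ofReal (r ^ t)) r =
      (Ioi R).indicator (fun r => ENNReal.ofReal (r ^ (n-1)) * ENNReal.ofReal (r ^ t)) r := by
    intro r; by_cases h : R < r <;> simp [Set.indicator, h]
  rw [lintegral_congr h2, lintegral_indicator measurableSet_Ioi, Measure.restrict_restrict
    measurableSet_Ioi]
  have h3 : Ioi R ∩ Ioi 0 = Ioi R := inter_eq_left.2 (Ioi_subset_Ioi hR.le)
  rw [h3]
  have h4 : ∫⁻ r in Ioi R, ENNReal.ofReal (r ^ (n-1)) * ENNReal.ofReal (r ^ t) =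
      ∫⁻ r in Ioi R, ENNReal.ofReal (r ^ ((n:ℝ) - 1 + t)) := by
    refine setLIntegral_congr_fun measurableSet_Ioi (fun r hr => ?_)
    have hr0 : 0 < r := hR.trans hr
    rw [← ENNReal.ofReal_mul (pow_nonneg hr0.le _)]
    congr 1
    rw [← Real.rpow_natCast r (n-1), ← Real.rpow_add hr0]
    congr 1
    push_cast [Nat.cast_sub hn]
    ring
  have hint : IntegrableOn (fun r : ℝ => r ^ ((n:ℝ) - 1 + t)) (Ioi R) :=
    integrableOn_Ioi_rpow_of_lt (by linarith) hR
  rw [h4, ← ofReal_integral_eq_lintegral_ofReal hint]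
  · congr 1
    rw [integral_Ioi_rpow_of_lt (by linarith) hR]
    have he : (n:ℝ) - 1 + t + 1 = (n:ℝ) + t := by ring
    rw [he]
    rw [div_eq_mul_inv, div_eq_mul_inv, ← neg_inv, mul_neg, neg_mul]
  · filter_upwards [ae_restrict_mem measurableSet_Ioi] with r hr
    exact Real.rpow_nonneg (hR.trans hr).le _
theorem hardy_euclidean_p_eq_q (n : ℕ) (hn : 1 ≤ n) (p α : ℝ) (hp : 1 < p)
    (hα : α < n * (p - 1)) :
    ∀ u : EuclideanSpace ℝ (Fin n) → ENNReal, Measurable u →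
      (∫⁻ x : EuclideanSpace ℝ (Fin n), (∫⁻ y in {y : EuclideanSpace ℝ (Fin n) | ‖y‖ < ‖x‖}, u y) ^ p * ENNReal.ofReal (‖x‖ ^ (α - p * n))) ^ (1/p)
        ≤ ENNReal.ofReal (p * sphereArea n / (n * (p - 1) - α)) *
            (∫⁻ x, u x ^ p * ENNReal.ofReal (‖x‖ ^ α)) ^ (1/p) := by
  intro u hu
  haveI : Nontrivial (EuclideanSpace ℝ (Fin n)) := by
    refine Module.nontrivial_of_finrank_pos (R := ℝ) (?_ : 0 < Module.finrank ℝ (EuclideanSpace ℝ (Fin n)))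
    rw [finrank_euclideanSpace_fin]; omega
  have hp0 : (0:ℝ) < p := by linarith
  have hp1 : (0:ℝ) < p - 1 := by linarith
  have hd0 : (0:ℝ) < (n:ℝ)*(p-1) - α := by linarith
  set δ : ℝ := ((n:ℝ)*(p-1) - α)/p with hδdef
  have hδ : 0 < δ := div_pos hd0 hp0
  set ω : ℝ≥0∞ := (volume : Measure (EuclideanSpace ℝ (Fin n))).toSphere univ with hωdef
  have hω_top : ω ≠ ⊤ := measure_ne_top _ _
  have hω0 : ω ≠ 0 := by
    rw [hωdef, Measure.toSphere_apply_univ]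
    rw [finrank_euclideanSpace_fin]
    have h1 : (volume : Measure (EuclideanSpace ℝ (Fin n))) (Metric.ball 0 1) ≠ 0 :=
      (measure_ball_pos volume 0 one_pos).ne'
    exact mul_ne_zero (Nat.cast_ne_zero.2 (by omega)) h1
  set C0 : ℝ≥0∞ := ω * ENNReal.ofReal (1/δ) with hC0def
  have hC0top : C0 ≠ ⊤ := ENNReal.mul_ne_top hω_top ENNReal.ofReal_ne_top
  have hC00 : C0 ≠ 0 := by
    rw [hC0def]
    simp [hω0, ENNReal.ofReal_eq_zero, not_le, hδ]
  set a : ℝ := (α + δ)/p with hadef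
  set q : ℝ := p/(p-1) with hqdef
  have hpq : p.HolderConjugate q := Real.HolderConjugate.conjExponent hp
  have hq0 : 0 < q := div_pos hp0 hp1
  set t : ℝ := δ*(p-1) + α - p*n with htdef
  have hap : a * p = α + δ := by rw [hadef]; field_simp
  have hsum1 : (n:ℝ) + (-a * q) = δ := by
    rw [hadef, hqdef, hδdef]; field_simp; ring
  have hsum2 : (n:ℝ) + t = -δ := by
    rw [htdef, hδdef]; field_simp; ring
  have h0 : ∀ᵐ x : EuclideanSpace ℝ (Fin n) ∂volume, x ≠ 0 := by
    rw [ae_iff]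
    have : {x : EuclideanSpace ℝ (Fin n) | ¬ x ≠ 0} = {0} := by ext x; simp
    rw [this]
    exact measure_singleton 0
  -- Step 1: pointwise Hölder bound
  have step1 : ∀ x : EuclideanSpace ℝ (Fin n),
      (∫⁻ y in {y : EuclideanSpace ℝ (Fin n) | ‖y‖ < ‖x‖}, u y) ^ p ≤
        (∫⁻ y in {y : EuclideanSpace ℝ (Fin n) | ‖y‖ < ‖x‖},
            u y ^ p * ENNReal.ofReal (‖y‖ ^ (α+δ))) *
          (C0 ^ (p-1) * ENNReal.ofReal (‖x‖ ^ (δ*(p-1)))) := by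
    intro x
    set ν := volume.restrict {y : EuclideanSpace ℝ (Fin n) | ‖y‖ < ‖x‖} with hν
    have hae : ∀ᵐ y ∂ν, y ≠ 0 := ae_restrict_of_ae h0
    have hH := ENNReal.lintegral_mul_le_Lp_mul_Lq ν hpq
      (f := fun y => u y * ENNReal.ofReal (‖y‖ ^ a))
      (g := fun y => ENNReal.ofReal (‖y‖ ^ (-a)))
      (by fun_prop) (by fun_prop)
    simp only [Pi.mul_apply] at hH
    have hfg : ∫⁻ y, u y ∂ν =
        ∫⁻ y, (u y * ENNReal.ofReal (‖y‖ ^ a)) * ENNReal.ofReal (‖y‖ ^ (-a)) ∂ν := by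
      refine lintegral_congr_ae (hae.mono fun y hy => ?_)
      have hy0 : (0:ℝ) < ‖y‖ := norm_pos_iff.2 hy
      show u y = u y * ENNReal.ofReal (‖y‖ ^ a) * ENNReal.ofReal (‖y‖ ^ (-a))
      rw [mul_assoc, ← ENNReal.ofReal_mul (Real.rpow_nonneg (norm_nonneg y) a),
        ← Real.rpow_add hy0, add_neg_cancel, Real.rpow_zero, ENNReal.ofReal_one, mul_one]
    have hfp : ∫⁻ y, (u y * ENNReal.ofReal (‖y‖ ^ a)) ^ p ∂ν
        = ∫⁻ y in {y : EuclideanSpace ℝ (Fin n) | ‖y‖ < ‖x‖},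
            u y ^ p * ENNReal.ofReal (‖y‖ ^ (α+δ)) := by
      refine lintegral_congr fun y => ?_
      rw [ENNReal.mul_rpow_of_nonneg _ _ hp0.le,
        ENNReal.ofReal_rpow_of_nonneg (Real.rpow_nonneg (norm_nonneg y) a) hp0.le,
        ← Real.rpow_mul (norm_nonneg y), hap]
    have hgq : ∫⁻ y, (ENNReal.ofReal (‖y‖ ^ (-a))) ^ q ∂ν
        = C0 * ENNReal.ofReal (‖x‖ ^ δ) := by
      have hptw : ∀ y : EuclideanSpace ℝ (Fin n),
          (ENNReal.ofReal (‖y‖ ^ (-a))) ^ q = ENNReal.ofReal (‖y‖ ^ (-a*q)) := by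
        intro y
        rw [ENNReal.ofReal_rpow_of_nonneg (Real.rpow_nonneg (norm_nonneg y) _) hq0.le,
          ← Real.rpow_mul (norm_nonneg y)]
      rw [hν, lintegral_congr hptw, lint_ball hn (-a*q) ‖x‖ (hsum1 ▸ hδ) (norm_nonneg x), hsum1]
      rw [div_eq_mul_inv, ENNReal.ofReal_mul (Real.rpow_nonneg (norm_nonneg x) δ), ← one_div,
        hC0def]
      ring
    rw [← hfg, hfp, hgq] at hH
    calc (∫⁻ y in {y : EuclideanSpace ℝ (Fin n) | ‖y‖ < ‖x‖}, u y) ^ p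
        ≤ ((∫⁻ y in {y : EuclideanSpace ℝ (Fin n) | ‖y‖ < ‖x‖},
              u y ^ p * ENNReal.ofReal (‖y‖ ^ (α+δ))) ^ (1/p) *
            (C0 * ENNReal.ofReal (‖x‖ ^ δ)) ^ (1/q)) ^ p :=
          ENNReal.rpow_le_rpow hH hp0.le
      _ = (∫⁻ y in {y : EuclideanSpace ℝ (Fin n) | ‖y‖ < ‖x‖},
              u y ^ p * ENNReal.ofReal (‖y‖ ^ (α+δ))) *
            (C0 ^ (p-1) * ENNReal.ofReal (‖x‖ ^ (δ*(p-1)))) := by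
          rw [ENNReal.mul_rpow_of_nonneg _ _ hp0.le, ← ENNReal.rpow_mul, ← ENNReal.rpow_mul,
            one_div_mul_cancel hp0.ne', ENNReal.rpow_one]
          have hqp : 1/q * p = p - 1 := by rw [hqdef]; field_simp
          rw [hqp, ENNReal.mul_rpow_of_nonneg _ _ hp1.le,
            ENNReal.ofReal_rpow_of_nonneg (Real.rpow_nonneg (norm_nonneg x) δ) hp1.le,
            ← Real.rpow_mul (norm_nonneg x)]
  -- Step 2/3: integrate the pointwise bound
  have hI : (∫⁻ x : EuclideanSpace ℝ (Fin n),
        (∫⁻ y in {y : EuclideanSpace ℝ (Fin n) | ‖y‖ < ‖x‖}, u y) ^ p *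
          ENNReal.ofReal (‖x‖ ^ (α - p * n)))
      ≤ C0 ^ (p-1) * ∫⁻ x : EuclideanSpace ℝ (Fin n),
          (∫⁻ y in {y : EuclideanSpace ℝ (Fin n) | ‖y‖ < ‖x‖},
            u y ^ p * ENNReal.ofReal (‖y‖ ^ (α+δ))) * ENNReal.ofReal (‖x‖ ^ t) := by
    rw [← lintegral_const_mul' _ _ (ENNReal.rpow_ne_top_of_nonneg hp1.le hC0top)]
    refine lintegral_mono_ae ?_
    filter_upwards [h0] with x hx
    have hx0 : (0:ℝ) < ‖x‖ := norm_pos_iff.2 hx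
    calc (∫⁻ y in {y : EuclideanSpace ℝ (Fin n) | ‖y‖ < ‖x‖}, u y) ^ p *
          ENNReal.ofReal (‖x‖ ^ (α - p * n))
        ≤ ((∫⁻ y in {y : EuclideanSpace ℝ (Fin n) | ‖y‖ < ‖x‖},
              u y ^ p * ENNReal.ofReal (‖y‖ ^ (α+δ))) *
            (C0 ^ (p-1) * ENNReal.ofReal (‖x‖ ^ (δ*(p-1))))) *
          ENNReal.ofReal (‖x‖ ^ (α - p * n)) := mul_le_mul_of_nonneg_right (step1 x) zero_le
      _ = C0 ^ (p-1) * ((∫⁻ y in {y : EuclideanSpace ℝ (Fin n) | ‖y‖ < ‖x‖},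
              u y ^ p * ENNReal.ofReal (‖y‖ ^ (α+δ))) * ENNReal.ofReal (‖x‖ ^ t)) := by
          rw [show t = δ*(p-1) + (α - p*n) by rw [htdef]; ring, Real.rpow_add hx0,
            ENNReal.ofReal_mul (Real.rpow_nonneg (norm_nonneg x) _)]
          ring
  -- Step 4: Tonelli
  have hswap : (∫⁻ x : EuclideanSpace ℝ (Fin n),
        (∫⁻ y in {y : EuclideanSpace ℝ (Fin n) | ‖y‖ < ‖x‖},
          u y ^ p * ENNReal.ofReal (‖y‖ ^ (α+δ))) * ENNReal.ofReal (‖x‖ ^ t))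
      = ∫⁻ y : EuclideanSpace ℝ (Fin n),
          (u y ^ p * ENNReal.ofReal (‖y‖ ^ (α+δ))) *
            ∫⁻ x : EuclideanSpace ℝ (Fin n) in {x | ‖y‖ < ‖x‖},
              ENNReal.ofReal (‖x‖ ^ t) := by
    set k : EuclideanSpace ℝ (Fin n) → EuclideanSpace ℝ (Fin n) → ℝ≥0∞ := fun x y =>
      ({z : EuclideanSpace ℝ (Fin n) × EuclideanSpace ℝ (Fin n) | ‖z.2‖ < ‖z.1‖}).indicator
        (fun z => u z.2 ^ p * ENNReal.ofReal (‖z.2‖ ^ (α+δ)) * ENNReal.ofReal (‖z.1‖ ^ t)) (x, y)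
      with hkdef
    have hsetprod : MeasurableSet
        {z : EuclideanSpace ℝ (Fin n) × EuclideanSpace ℝ (Fin n) | ‖z.2‖ < ‖z.1‖} :=
      measurableSet_lt (measurable_norm.comp measurable_snd) (measurable_norm.comp measurable_fst)
    have hk : Measurable (Function.uncurry k) := by
      refine Measurable.indicator ?_ hsetprod
      fun_prop
    calc (∫⁻ x : EuclideanSpace ℝ (Fin n),
          (∫⁻ y in {y : EuclideanSpace ℝ (Fin n) | ‖y‖ < ‖x‖},
            u y ^ p * ENNReal.ofReal (‖y‖ ^ (α+δ))) * ENNReal.ofReal (‖x‖ ^ t))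
        = ∫⁻ x, ∫⁻ y, k x y := by
          refine lintegral_congr fun x => ?_
          have hsx : MeasurableSet {y : EuclideanSpace ℝ (Fin n) | ‖y‖ < ‖x‖} :=
            measurable_norm measurableSet_Iio
          rw [← lintegral_mul_const' _ _ ENNReal.ofReal_ne_top, ← lintegral_indicator hsx]
          refine lintegral_congr fun y => ?_
          by_cases h : ‖y‖ < ‖x‖ <;> simp [hkdef, Set.indicator, h]
      _ = ∫⁻ y, ∫⁻ x, k x y := lintegral_lintegral_swap hk.aemeasurable
      _ = _ := by
          refine lintegral_congr fun y => ?_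
          have hset' : MeasurableSet {x : EuclideanSpace ℝ (Fin n) | ‖y‖ < ‖x‖} :=
            measurable_norm measurableSet_Ioi
          have : ∀ x, k x y = ({x : EuclideanSpace ℝ (Fin n) | ‖y‖ < ‖x‖}).indicator
              (fun x => (u y ^ p * ENNReal.ofReal (‖y‖ ^ (α+δ))) *
                ENNReal.ofReal (‖x‖ ^ t)) x := by
            intro x
            by_cases h : ‖y‖ < ‖x‖ <;> simp [hkdef, Set.indicator, h]
          rw [lintegral_congr this, lintegral_indicator hset',
            lintegral_const_mul _ (by fun_prop)]
  -- Step 5: compute inner integral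
  have hinner : ∀ᵐ y : EuclideanSpace ℝ (Fin n) ∂volume,
      (u y ^ p * ENNReal.ofReal (‖y‖ ^ (α+δ))) *
          (∫⁻ x : EuclideanSpace ℝ (Fin n) in {x | ‖y‖ < ‖x‖}, ENNReal.ofReal (‖x‖ ^ t))
        = C0 * (u y ^ p * ENNReal.ofReal (‖y‖ ^ α)) := by
    filter_upwards [h0] with y hy
    have hy0 : (0:ℝ) < ‖y‖ := norm_pos_iff.2 hy
    rw [lint_compl hn t ‖y‖ (by rw [hsum2]; linarith) hy0, hsum2, neg_neg,
      div_eq_mul_inv, ENNReal.ofReal_mul (Real.rpow_nonneg (norm_nonneg y) _), ← one_div]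
    have : ENNReal.ofReal (‖y‖ ^ (α+δ)) * ENNReal.ofReal (‖y‖ ^ (-δ))
        = ENNReal.ofReal (‖y‖ ^ α) := by
      rw [← ENNReal.ofReal_mul (Real.rpow_nonneg (norm_nonneg y) _), ← Real.rpow_add hy0,
        add_neg_cancel_right]
    calc u y ^ p * ENNReal.ofReal (‖y‖ ^ (α+δ)) *
          (ω * (ENNReal.ofReal (‖y‖ ^ (-δ)) * ENNReal.ofReal (1/δ)))
        = (ω * ENNReal.ofReal (1/δ)) * (u y ^ p *
            (ENNReal.ofReal (‖y‖ ^ (α+δ)) * ENNReal.ofReal (‖y‖ ^ (-δ)))) := by ring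
      _ = C0 * (u y ^ p * ENNReal.ofReal (‖y‖ ^ α)) := by rw [this, hC0def]
  have hfinal : (∫⁻ x : EuclideanSpace ℝ (Fin n),
        (∫⁻ y in {y : EuclideanSpace ℝ (Fin n) | ‖y‖ < ‖x‖}, u y) ^ p *
          ENNReal.ofReal (‖x‖ ^ (α - p * n)))
      ≤ C0 ^ p * ∫⁻ x, u x ^ p * ENNReal.ofReal (‖x‖ ^ α) := by
    refine hI.trans (le_of_eq ?_)
    have hCC : C0 ^ (p-1) * C0 = C0 ^ p := by
      nth_rewrite 2 [← ENNReal.rpow_one C0]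
      rw [← ENNReal.rpow_add _ _ hC00 hC0top]
      norm_num
    rw [hswap, lintegral_congr_ae hinner, lintegral_const_mul' C0 _ hC0top, ← mul_assoc, hCC]
  -- Conclusion
  have hC0eq : ENNReal.ofReal (p * sphereArea n / ((n:ℝ) * (p - 1) - α)) = C0 := by
    have hωr : ENNReal.ofReal (sphereArea n) = ω := by
      rw [sphereArea, hωdef, ENNReal.ofReal_toReal hω_top]
    have hsa : (0:ℝ) ≤ sphereArea n := by rw [sphereArea]; exact ENNReal.toReal_nonneg
    rw [hC0def, ← hωr, ← ENNReal.ofReal_mul hsa]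
    congr 1
    rw [hδdef]
    field_simp
  calc (∫⁻ x : EuclideanSpace ℝ (Fin n),
        (∫⁻ y in {y : EuclideanSpace ℝ (Fin n) | ‖y‖ < ‖x‖}, u y) ^ p *
          ENNReal.ofReal (‖x‖ ^ (α - p * n))) ^ (1/p)
      ≤ (C0 ^ p * ∫⁻ x, u x ^ p * ENNReal.ofReal (‖x‖ ^ α)) ^ (1/p) :=
        ENNReal.rpow_le_rpow hfinal (by positivity)
    _ = C0 * (∫⁻ x, u x ^ p * ENNReal.ofReal (‖x‖ ^ α)) ^ (1/p) := by
        rw [ENNReal.mul_rpow_of_nonneg _ _ (by positivity), ← ENNReal.rpow_mul,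
          mul_one_div_cancel hp0.ne', ENNReal.rpow_one]
    _ = _ := by rw [hC0eq]
end
end

section
/- Let $n\ge 1$, $1<p\le q<\infty$, and $\alpha,\beta\in\mathbb{R}$ with $\alpha>n(p-1)$ and $q(\alpha+n)-p(\beta+n)=pqn$. Then there exists $C<\infty$ such that for all nonnegative measurable $u$ on $\mathbb{R}^n$, $\left(\int_{\mathbb{R}^n}\left(\int_{|y|\ge |x|} u(y)\,dy\right)^q |x|^{\beta}\,dx\right)^{1/q} \le C\left(\int_{\mathbb{R}^n} u(x)^p |x|^{\alpha}\,dx\right)^{1/p}$. -/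
/-!
Write `H u (x) = ∫_{‖y‖ ≥ ‖x‖} u`. Hölder's inequality against the weight `‖y‖^γ`, `γ > n(p-1)`,
together with `∫_{‖y‖ ≥ r} ‖y‖^{-γ/(p-1)} = c r^{n-γ/(p-1)}` (by scaling), gives
`H u (x) ≲ ‖x‖^{-(γ - n(p-1))/p} (∫_{‖y‖ ≥ ‖x‖} u^p ‖y‖^γ)^{1/p}`.
For `q = p` use `γ = α - δ` with `δ = (α - n(p-1))/2 > 0`: after Tonelli what remains is
`∫_{‖x‖ ≤ ‖y‖} ‖x‖^{δ-n} = c ‖y‖^δ`, finite since `δ > 0`, and it restores the weight `‖y‖^α`.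
For `q > p` write `(H u)^q = (H u)^{q-p} (H u)^p` and bound the first factor by the estimate with
`γ = α`; the exponent relation turns what is left into the case `q = p`.
-/

open MeasureTheory Set ENNReal Module Metric

theorem ENNReal.lintegral_le_weighted_holder {α : Type*} [MeasurableSpace α] (μ : Measure α)
    {p p' : ℝ} (hpp' : p.HolderConjugate p') {u w : α → ℝ≥0∞} (hu : AEMeasurable u μ)
    (hw : AEMeasurable w μ) (hw0 : ∀ᵐ x ∂μ, w x ≠ 0) (hwt : ∀ᵐ x ∂μ, w x ≠ ∞) :
    ∫⁻ x, u x ∂μ ≤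
      (∫⁻ x, u x ^ p * w x ∂μ) ^ (1 / p) * (∫⁻ x, w x ^ (-(p' / p)) ∂μ) ^ (1 / p') := by
  have hp := hpp'.pos
  have hp' := hpp'.symm.pos
  have hsplit : ∀ᵐ x ∂μ, u x = ((fun x ↦ u x * w x ^ (1 / p)) * fun x ↦ w x ^ (-(1 / p))) x := by
    filter_upwards [hw0, hwt] with x hx0 hxt
    rw [Pi.mul_apply, mul_assoc, ← ENNReal.rpow_add _ _ hx0 hxt, add_neg_cancel, rpow_zero,
      mul_one]
  calc ∫⁻ x, u x ∂μ = ∫⁻ x, ((fun x ↦ u x * w x ^ (1 / p)) * fun x ↦ w x ^ (-(1 / p))) x ∂μ :=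
        lintegral_congr_ae hsplit
    _ ≤ _ := ENNReal.lintegral_mul_le_Lp_mul_Lq μ hpp' (by fun_prop) (by fun_prop)
    _ = _ := by
      congr 3 with x
      · rw [ENNReal.mul_rpow_of_nonneg _ _ hp.le, ← ENNReal.rpow_mul, one_div_mul_cancel hp.ne',
          rpow_one]
      · rw [← ENNReal.rpow_mul]
        ring_nf

theorem ENNReal.ofReal_rpow_rpow_mul_ofReal_rpow {r : ℝ} (hr : 0 < r) (a b c : ℝ) :
    ENNReal.ofReal (r ^ a) ^ b * ENNReal.ofReal (r ^ c) = ENNReal.ofReal (r ^ (a * b + c)) := by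
  rw [ofReal_rpow_of_pos (Real.rpow_pos_of_pos hr a), ← Real.rpow_mul hr.le,
    ← ofReal_mul (by positivity), ← Real.rpow_add hr]

namespace MeasureTheory

theorem lintegral_mul_setLIntegral_le_comm {α : Type*} [MeasurableSpace α]
    (μ : Measure α) [SFinite μ] {ρ : α → ℝ} (hρ : Measurable ρ) {f g : α → ℝ≥0∞}
    (hf : Measurable f) (hg : Measurable g) :
    ∫⁻ x, g x * ∫⁻ y in {y | ρ x ≤ ρ y}, f y ∂μ ∂μ
      = ∫⁻ y, f y * ∫⁻ x in {x | ρ x ≤ ρ y}, g x ∂μ ∂μ := by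
  have hS : MeasurableSet {z : α × α | ρ z.1 ≤ ρ z.2} :=
    measurableSet_le (by fun_prop) (by fun_prop)
  have hF : ∀ x y, {z : α × α | ρ z.1 ≤ ρ z.2}.indicator (fun z ↦ g z.1 * f z.2) (x, y)
      = {y | ρ x ≤ ρ y}.indicator (fun y ↦ g x * f y) y := fun x y ↦ by
    by_cases h : ρ x ≤ ρ y <;> simp [h]
  have hF' : ∀ x y, {z : α × α | ρ z.1 ≤ ρ z.2}.indicator (fun z ↦ g z.1 * f z.2) (x, y)
      = {x | ρ x ≤ ρ y}.indicator (fun x ↦ f y * g x) x := fun x y ↦ by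
    by_cases h : ρ x ≤ ρ y <;> simp [h, mul_comm]
  calc ∫⁻ x, g x * ∫⁻ y in {y | ρ x ≤ ρ y}, f y ∂μ ∂μ
      = ∫⁻ x, ∫⁻ y, {z : α × α | ρ z.1 ≤ ρ z.2}.indicator (fun z ↦ g z.1 * f z.2) (x, y) ∂μ ∂μ := by
        refine lintegral_congr fun x ↦ ?_
        simp_rw [hF, lintegral_indicator (measurableSet_le measurable_const hρ),
          lintegral_const_mul _ hf]
    _ = ∫⁻ y, ∫⁻ x, {z : α × α | ρ z.1 ≤ ρ z.2}.indicator (fun z ↦ g z.1 * f z.2) (x, y) ∂μ ∂μ :=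
        lintegral_lintegral_swap ((Measurable.indicator (by fun_prop) hS).aemeasurable)
    _ = _ := by
        refine lintegral_congr fun y ↦ ?_
        simp_rw [hF', lintegral_indicator (measurableSet_le hρ measurable_const),
          lintegral_const_mul _ hg]

theorem measurable_setLIntegral_le {α : Type*} [MeasurableSpace α]
    (μ : Measure α) {ρ : α → ℝ} (hρ : Measurable ρ) (u : α → ℝ≥0∞) :
    Measurable fun x ↦ ∫⁻ y in {y | ρ x ≤ ρ y}, u y ∂μ :=
  (Antitone.measurable (f := fun r : ℝ ↦ ∫⁻ y in {y | r ≤ ρ y}, u y ∂μ)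
    fun _ _ hrs ↦ lintegral_mono_set fun _ hy ↦ hrs.trans hy).comp hρ

noncomputable def conjugateHardy {E : Type*} [Norm E] [MeasurableSpace E] (μ : Measure E)
    (u : E → ℝ≥0∞) (x : E) : ℝ≥0∞ :=
  ∫⁻ y in {y | ‖x‖ ≤ ‖y‖}, u y ∂μ

variable {E : Type*} [NormedAddCommGroup E] [NormedSpace ℝ E] [MeasurableSpace E] [BorelSpace E]
  [FiniteDimensional ℝ E] (μ : Measure E) [μ.IsAddHaarMeasure]

theorem setLIntegral_comp_smul (f : E → ℝ≥0∞) (s : Set E) {R : ℝ} (hR : R ≠ 0) :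
    ∫⁻ x in (R • ·) ⁻¹' s, f (R • x) ∂μ
      = ENNReal.ofReal |(R ^ finrank ℝ E)⁻¹| * ∫⁻ x in s, f x ∂μ := by
  let g := (Homeomorph.smul (isUnit_iff_ne_zero.2 hR).unit : E ≃ₜ E).toMeasurableEquiv
  calc ∫⁻ x in g ⁻¹' s, f (g x) ∂μ = ∫⁻ y, f y ∂(Measure.map g (μ.restrict (g ⁻¹' s))) :=
        (lintegral_map_equiv f g).symm
    _ = _ := by
      rw [← g.restrict_map, show (g : E → E) = (R • ·) from rfl, Measure.map_addHaar_smul μ hR,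
        Measure.restrict_smul, lintegral_smul_measure, smul_eq_mul]

theorem setLIntegral_norm_rpow_norm_div_mem (a : ℝ) (s : Set ℝ) {r : ℝ} (hr : 0 < r) :
    ∫⁻ y in {y : E | ‖y‖ / r ∈ s}, ENNReal.ofReal (‖y‖ ^ a) ∂μ
      = ENNReal.ofReal (r ^ (a + finrank ℝ E))
        * ∫⁻ y in {y : E | ‖y‖ ∈ s}, ENNReal.ofReal (‖y‖ ^ a) ∂μ := by
  have hpre : (r • ·) ⁻¹' {y : E | ‖y‖ / r ∈ s} = {x | ‖x‖ ∈ s} := by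
    ext x
    simp [norm_smul, abs_of_pos hr, hr.ne']
  have hscale :=
    setLIntegral_comp_smul μ (fun y ↦ ENNReal.ofReal (‖y‖ ^ a)) {y : E | ‖y‖ / r ∈ s} hr.ne'
  simp only [hpre, norm_smul, Real.norm_of_nonneg hr.le, Real.mul_rpow hr.le (norm_nonneg _),
    ENNReal.ofReal_mul (Real.rpow_nonneg hr.le _)] at hscale
  rw [lintegral_const_mul' _ _ ofReal_ne_top] at hscale
  have hn : ENNReal.ofReal (r ^ finrank ℝ E) * ENNReal.ofReal |(r ^ finrank ℝ E)⁻¹| = 1 := by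
    rw [← ENNReal.ofReal_mul (by positivity), abs_of_pos (by positivity),
      mul_inv_cancel₀ (by positivity), ENNReal.ofReal_one]
  calc _ = ENNReal.ofReal (r ^ finrank ℝ E) * ENNReal.ofReal |(r ^ finrank ℝ E)⁻¹|
          * ∫⁻ y in {y : E | ‖y‖ / r ∈ s}, ENNReal.ofReal (‖y‖ ^ a) ∂μ := by rw [hn, one_mul]
    _ = _ := by
      rw [mul_assoc, ← hscale, Real.rpow_add hr, Real.rpow_natCast,
        ENNReal.ofReal_mul (by positivity)]
      ring

theorem setLIntegral_norm_rpow_one_le_norm_lt_top {a : ℝ} (ha : a < -finrank ℝ E) :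
    ∫⁻ y in {y : E | 1 ≤ ‖y‖}, ENNReal.ofReal (‖y‖ ^ a) ∂μ < ∞ := by
  have hbound : ∀ y ∈ {y : E | 1 ≤ ‖y‖},
      ENNReal.ofReal (‖y‖ ^ a)
        ≤ ENNReal.ofReal (2 ^ (-a)) * ENNReal.ofReal ((1 + ‖y‖) ^ (-(-a))) := by
    intro y (hy : 1 ≤ ‖y‖)
    rw [← ENNReal.ofReal_mul (by positivity), neg_neg]
    refine ENNReal.ofReal_le_ofReal ?_
    calc ‖y‖ ^ a = 2 ^ (-a) * (2 * ‖y‖) ^ a := by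
          rw [Real.mul_rpow zero_le_two (norm_nonneg y), ← mul_assoc, ← Real.rpow_add two_pos,
            neg_add_cancel, Real.rpow_zero, one_mul]
      _ ≤ 2 ^ (-a) * (1 + ‖y‖) ^ a := by
          refine mul_le_mul_of_nonneg_left (Real.rpow_le_rpow_of_nonpos (by positivity)
            (by linarith) (by linarith [(finrank ℝ E).cast_nonneg (α := ℝ)])) (by positivity)
  calc _ ≤ ∫⁻ y in {y : E | 1 ≤ ‖y‖},
        ENNReal.ofReal (2 ^ (-a)) * ENNReal.ofReal ((1 + ‖y‖) ^ (-(-a))) ∂μ :=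
        setLIntegral_mono (by fun_prop) hbound
    _ ≤ ENNReal.ofReal (2 ^ (-a)) * ∫⁻ y, ENNReal.ofReal ((1 + ‖y‖) ^ (-(-a))) ∂μ := by
        rw [lintegral_const_mul' _ _ ofReal_ne_top]
        exact mul_le_mul_right (setLIntegral_le_lintegral _ _) _
    _ < ∞ := mul_lt_top ofReal_lt_top (finite_integral_one_add_norm (by linarith))

theorem setLIntegral_norm_rpow_norm_le_one_lt_top [Nontrivial E] {a : ℝ}
    (ha : -finrank ℝ E < a) :
    ∫⁻ y in {y : E | ‖y‖ ≤ 1}, ENNReal.ofReal (‖y‖ ^ a) ∂μ < ∞ := by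
  have hball : IntegrableOn (fun y : E ↦ ‖y‖ ^ a) (ball 0 2) μ := by
    rw [integrableOn_fun_norm_addHaar μ (f := fun ρ ↦ ρ ^ a)]
    refine ((intervalIntegral.integrableOn_Ioo_rpow_iff (s := a + (finrank ℝ E - 1)) two_pos).2
      (by linarith)).congr_fun (fun ρ (hρ : ρ ∈ Ioo 0 2) ↦ ?_) measurableSet_Ioo
    have hn : 1 ≤ finrank ℝ E := finrank_pos
    rw [smul_eq_mul, ← Real.rpow_natCast, Nat.cast_sub hn, Nat.cast_one, ← Real.rpow_add hρ.1,
      add_comm]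
  refine (hball.mono_set fun y (hy : ‖y‖ ≤ 1) ↦ ?_).lintegral_lt_top
  rw [mem_ball_zero_iff]
  linarith

theorem setLIntegral_norm_rpow_le_norm (a : ℝ) {r : ℝ} (hr : 0 < r) :
    ∫⁻ y in {y : E | r ≤ ‖y‖}, ENNReal.ofReal (‖y‖ ^ a) ∂μ
      = ENNReal.ofReal (r ^ (a + finrank ℝ E))
        * ∫⁻ y in {y : E | 1 ≤ ‖y‖}, ENNReal.ofReal (‖y‖ ^ a) ∂μ := by
  simpa [one_le_div hr] using setLIntegral_norm_rpow_norm_div_mem μ a (Ici 1) hr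

theorem setLIntegral_norm_rpow_norm_le (a : ℝ) {r : ℝ} (hr : 0 < r) :
    ∫⁻ y in {y : E | ‖y‖ ≤ r}, ENNReal.ofReal (‖y‖ ^ a) ∂μ
      = ENNReal.ofReal (r ^ (a + finrank ℝ E))
        * ∫⁻ y in {y : E | ‖y‖ ≤ 1}, ENNReal.ofReal (‖y‖ ^ a) ∂μ := by
  simpa [div_le_one hr] using setLIntegral_norm_rpow_norm_div_mem μ a (Iic 1) hr

theorem exists_conjugateHardy_le_weighted {p γ : ℝ} (hp : 1 < p)
    (hγ : finrank ℝ E * (p - 1) < γ) :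
    ∃ K : ℝ≥0∞, K ≠ ∞ ∧ ∀ u : E → ℝ≥0∞, Measurable u → ∀ x : E, x ≠ 0 →
      conjugateHardy μ u x ≤ K * ENNReal.ofReal (‖x‖ ^ (-((γ - finrank ℝ E * (p - 1)) / p)))
        * conjugateHardy μ (fun y ↦ u y ^ p * ENNReal.ofReal (‖y‖ ^ γ)) x ^ (1 / p) := by
  have hpp' : p.HolderConjugate (p / (p - 1)) := (Real.holderConjugate_iff_eq_conjExponent hp).2 rfl
  have hp1 : 0 < p - 1 := by linarith
  set T := ∫⁻ y in {y : E | 1 ≤ ‖y‖}, ENNReal.ofReal (‖y‖ ^ (-(γ / (p - 1)))) ∂μ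
  have hT : T ≠ ∞ := (setLIntegral_norm_rpow_one_le_norm_lt_top μ (by
    rw [neg_lt_neg_iff, lt_div_iff₀ hp1]; exact hγ)).ne
  refine ⟨T ^ (1 / (p / (p - 1))), rpow_ne_top_of_nonneg (by positivity) hT, fun u hu x hx ↦ ?_⟩
  have hr : 0 < ‖x‖ := norm_pos_iff.2 hx
  unfold conjugateHardy
  generalize ‖x‖ = r at hr ⊢
  have hmeas : MeasurableSet {y : E | r ≤ ‖y‖} := measurableSet_le measurable_const measurable_norm
  have hpos : ∀ y ∈ {y : E | r ≤ ‖y‖}, 0 < ‖y‖ := fun y hy ↦ hr.trans_le hy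
  have hweight : ∫⁻ y in {y | r ≤ ‖y‖}, ENNReal.ofReal (‖y‖ ^ γ) ^ (-(p / (p - 1) / p)) ∂μ
      = ENNReal.ofReal (r ^ (-(γ / (p - 1)) + finrank ℝ E)) * T := by
    rw [← setLIntegral_norm_rpow_le_norm μ _ hr]
    refine setLIntegral_congr_fun hmeas fun y hy ↦ ?_
    rw [ENNReal.ofReal_rpow_of_pos (Real.rpow_pos_of_pos (hpos y hy) _),
      ← Real.rpow_mul (norm_nonneg _)]
    congr 2
    field_simp
  calc ∫⁻ y in {y | r ≤ ‖y‖}, u y ∂μ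
      ≤ _ := ENNReal.lintegral_le_weighted_holder _ hpp' hu.aemeasurable
        (w := fun y ↦ ENNReal.ofReal (‖y‖ ^ γ)) (by fun_prop)
        ((ae_restrict_iff' hmeas).2 (.of_forall fun y hy ↦ by
          simpa using Real.rpow_pos_of_pos (hpos y hy) γ))
        (.of_forall fun _ ↦ ofReal_ne_top)
    _ = _ := by
      rw [hweight, ENNReal.mul_rpow_of_nonneg _ _ (by positivity),
        ENNReal.ofReal_rpow_of_pos (by positivity), ← Real.rpow_mul hr.le]
      have hexp : (-(γ / (p - 1)) + finrank ℝ E) * (1 / (p / (p - 1)))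
          = -((γ - finrank ℝ E * (p - 1)) / p) := by
        field_simp
        ring
      rw [hexp, mul_comm (ENNReal.ofReal _) (T ^ _), mul_comm]

theorem lintegral_norm_rpow_mul_conjugateHardy [Nontrivial E] {f : E → ℝ≥0∞} (hf : Measurable f)
    (b : ℝ) :
    ∫⁻ x, ENNReal.ofReal (‖x‖ ^ (b - finrank ℝ E)) * conjugateHardy μ f x ∂μ
      = (∫⁻ x in {x : E | ‖x‖ ≤ 1}, ENNReal.ofReal (‖x‖ ^ (b - finrank ℝ E)) ∂μ)
        * ∫⁻ y, f y * ENNReal.ofReal (‖y‖ ^ b) ∂μ := by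
  unfold conjugateHardy
  rw [lintegral_mul_setLIntegral_le_comm μ measurable_norm hf (by fun_prop),
    ← lintegral_const_mul _ (by fun_prop)]
  refine lintegral_congr_ae ?_
  filter_upwards [Measure.ae_ne μ 0] with y hy
  rw [setLIntegral_norm_rpow_norm_le μ _ (norm_pos_iff.2 hy), sub_add_cancel]
  ring

theorem exists_lintegral_conjugateHardy_rpow_le [Nontrivial E] {p α : ℝ} (hp : 1 < p)
    (hα : finrank ℝ E * (p - 1) < α) :
    ∃ C : ℝ≥0∞, C ≠ ∞ ∧ ∀ u : E → ℝ≥0∞, Measurable u →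
      ∫⁻ x, conjugateHardy μ u x ^ p * ENNReal.ofReal (‖x‖ ^ (α - finrank ℝ E * p)) ∂μ
        ≤ C * ∫⁻ y, u y ^ p * ENNReal.ofReal (‖y‖ ^ α) ∂μ := by
  set n : ℝ := (finrank ℝ E : ℝ)
  have hp0 : 0 < p := by linarith
  have hα0 : 0 < α := lt_of_le_of_lt (by positivity) hα
  set δ := (α - n * (p - 1)) / 2 with hδ
  obtain ⟨K, hK, hholder⟩ :=
    exists_conjugateHardy_le_weighted μ hp (γ := α - δ) (by rw [hδ]; linarith)
  set L := ∫⁻ x in {x : E | ‖x‖ ≤ 1}, ENNReal.ofReal (‖x‖ ^ (δ - n)) ∂μ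
  have hL : L ≠ ∞ := (setLIntegral_norm_rpow_norm_le_one_lt_top μ (by rw [hδ]; linarith)).ne
  refine ⟨K ^ p * L, mul_ne_top (rpow_ne_top_of_nonneg hp0.le hK) hL, fun u hu ↦ ?_⟩
  set f : E → ℝ≥0∞ := fun y ↦ u y ^ p * ENNReal.ofReal (‖y‖ ^ (α - δ))
  have hpoint : ∀ x : E, x ≠ 0 →
      conjugateHardy μ u x ^ p * ENNReal.ofReal (‖x‖ ^ (α - n * p))
        ≤ K ^ p * (ENNReal.ofReal (‖x‖ ^ (δ - n)) * conjugateHardy μ f x) := by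
    intro x hx
    have hweight := ofReal_rpow_rpow_mul_ofReal_rpow (norm_pos_iff.2 hx)
      (-((α - δ - n * (p - 1)) / p)) p (α - n * p)
    rw [show -((α - δ - n * (p - 1)) / p) * p + (α - n * p) = δ - n by field_simp; linarith]
      at hweight
    calc _ ≤ (K * ENNReal.ofReal (‖x‖ ^ (-((α - δ - n * (p - 1)) / p)))
            * conjugateHardy μ f x ^ (1 / p)) ^ p * ENNReal.ofReal (‖x‖ ^ (α - n * p)) :=
          mul_le_mul_left (rpow_le_rpow (hholder u hu x hx) hp0.le) _
      _ = _ := by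
        rw [mul_rpow_of_nonneg _ _ hp0.le, mul_rpow_of_nonneg _ _ hp0.le, ← rpow_mul,
          one_div_mul_cancel hp0.ne', rpow_one, ← hweight]
        ring
  calc _ ≤ ∫⁻ x, K ^ p * (ENNReal.ofReal (‖x‖ ^ (δ - n)) * conjugateHardy μ f x) ∂μ :=
        lintegral_mono_ae (by filter_upwards [Measure.ae_ne μ 0] with x hx using hpoint x hx)
    _ = K ^ p * (L * ∫⁻ y, f y * ENNReal.ofReal (‖y‖ ^ δ) ∂μ) := by
        rw [lintegral_const_mul' _ _ (rpow_ne_top_of_nonneg hp0.le hK),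
          lintegral_norm_rpow_mul_conjugateHardy μ (by fun_prop)]
    _ = _ := by
        simp_rw [f, mul_assoc, ← ofReal_mul (Real.rpow_nonneg (norm_nonneg _) _),
          ← Real.rpow_add' (norm_nonneg _) (by linarith : α - δ + δ ≠ 0), sub_add_cancel]

theorem exists_lintegral_conjugateHardy_rpow_mul_le [Nontrivial E] {p q α β : ℝ} (hp : 1 < p)
    (hpq : p ≤ q) (hα : finrank ℝ E * (p - 1) < α)
    (hrel : q * (α + finrank ℝ E) - p * (β + finrank ℝ E) = p * q * finrank ℝ E) :
    ∃ C : ℝ≥0∞, C ≠ ∞ ∧ ∀ u : E → ℝ≥0∞, Measurable u →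
      ∫⁻ x, conjugateHardy μ u x ^ q * ENNReal.ofReal (‖x‖ ^ β) ∂μ
        ≤ C * (∫⁻ x, u x ^ p * ENNReal.ofReal (‖x‖ ^ α) ∂μ) ^ (q / p) := by
  set n : ℝ := (finrank ℝ E : ℝ)
  have hp0 : 0 < p := by linarith
  obtain ⟨K, hK, hholder⟩ := exists_conjugateHardy_le_weighted μ hp hα
  obtain ⟨C, hC, hdiag⟩ := exists_lintegral_conjugateHardy_rpow_le μ hp hα
  refine ⟨K ^ (q - p) * C, mul_ne_top (rpow_ne_top_of_nonneg (by linarith) hK) hC,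
    fun u hu ↦ ?_⟩
  set N := ∫⁻ x, u x ^ p * ENNReal.ofReal (‖x‖ ^ α) ∂μ
  set U := conjugateHardy μ u
  have hpoint : ∀ x : E, x ≠ 0 → U x ^ q * ENNReal.ofReal (‖x‖ ^ β)
      ≤ K ^ (q - p) * N ^ ((q - p) / p) * (U x ^ p * ENNReal.ofReal (‖x‖ ^ (α - n * p))) := by
    intro x hx
    have hsup : U x ≤ K * ENNReal.ofReal (‖x‖ ^ (-((α - n * (p - 1)) / p))) * N ^ (1 / p) :=
      (hholder u hu x hx).trans (mul_le_mul_right (rpow_le_rpow (setLIntegral_le_lintegral _ _)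
        (by positivity)) _)
    have hweight := ofReal_rpow_rpow_mul_ofReal_rpow (norm_pos_iff.2 hx)
      (-((α - n * (p - 1)) / p)) (q - p) β
    rw [show -((α - n * (p - 1)) / p) * (q - p) + β = α - n * p by
      field_simp; linear_combination -hrel] at hweight
    calc U x ^ q * ENNReal.ofReal (‖x‖ ^ β)
        = U x ^ (q - p) * U x ^ p * ENNReal.ofReal (‖x‖ ^ β) := by
          rw [← rpow_add_of_nonneg _ _ (by linarith) hp0.le, sub_add_cancel]
      _ ≤ (K * ENNReal.ofReal (‖x‖ ^ (-((α - n * (p - 1)) / p))) * N ^ (1 / p)) ^ (q - p)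
            * U x ^ p * ENNReal.ofReal (‖x‖ ^ β) := by
          gcongr
      _ = _ := by
        rw [mul_rpow_of_nonneg _ _ (by linarith), mul_rpow_of_nonneg _ _ (by linarith),
          ← rpow_mul, ← hweight, one_div_mul_eq_div]
        ring
  have hU : Measurable U := measurable_setLIntegral_le μ measurable_norm u
  have hN : N ^ ((q - p) / p) * N = N ^ (q / p) := by
    nth_rewrite 2 [← rpow_one N]
    rw [← rpow_add_of_nonneg _ _ (div_nonneg (by linarith) hp0.le) zero_le_one]
    congr 1
    field_simp
    ring
  calc _ ≤ ∫⁻ x, K ^ (q - p) * N ^ ((q - p) / p)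
          * (U x ^ p * ENNReal.ofReal (‖x‖ ^ (α - n * p))) ∂μ :=
        lintegral_mono_ae (by filter_upwards [Measure.ae_ne μ 0] with x hx using hpoint x hx)
    _ ≤ K ^ (q - p) * N ^ ((q - p) / p) * (C * N) := by
        rw [lintegral_const_mul _ (by fun_prop)]
        exact mul_le_mul_right (hdiag u hu) _
    _ = _ := by
        rw [← hN]
        ring

theorem exists_conjugateHardy_le [Nontrivial E] {p q α β : ℝ} (hp : 1 < p) (hpq : p ≤ q)
    (hα : finrank ℝ E * (p - 1) < α)
    (hrel : q * (α + finrank ℝ E) - p * (β + finrank ℝ E) = p * q * finrank ℝ E) :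
    ∃ C : ℝ≥0∞, C ≠ ∞ ∧ ∀ u : E → ℝ≥0∞, Measurable u →
      (∫⁻ x, conjugateHardy μ u x ^ q * ENNReal.ofReal (‖x‖ ^ β) ∂μ) ^ (1 / q)
        ≤ C * (∫⁻ x, u x ^ p * ENNReal.ofReal (‖x‖ ^ α) ∂μ) ^ (1 / p) := by
  have hq0 : 0 < q := by linarith
  obtain ⟨C, hC, hbound⟩ := exists_lintegral_conjugateHardy_rpow_mul_le μ hp hpq hα hrel
  refine ⟨C ^ (1 / q), rpow_ne_top_of_nonneg (by positivity) hC, fun u hu ↦ ?_⟩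
  calc _ ≤ (C * (∫⁻ x, u x ^ p * ENNReal.ofReal (‖x‖ ^ α) ∂μ) ^ (q / p)) ^ (1 / q) :=
        rpow_le_rpow (hbound u hu) (by positivity)
    _ = _ := by
      rw [mul_rpow_of_nonneg _ _ (by positivity), ← rpow_mul]
      congr 2
      field_simp

end MeasureTheory

theorem conjugate_hardy_euclidean (n : ℕ) (hn : 1 ≤ n) (p q α β : ℝ) (hp : 1 < p) (hpq : p ≤ q)
    (hα : n * (p - 1) < α) (hrel : q * (α + n) - p * (β + n) = p * q * n) :
    ∃ C : ENNReal, C ≠ ⊤ ∧ ∀ u : EuclideanSpace ℝ (Fin n) → ENNReal, Measurable u →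
      (∫⁻ x : EuclideanSpace ℝ (Fin n), (∫⁻ y in {y : EuclideanSpace ℝ (Fin n) | ‖x‖ ≤ ‖y‖}, u y) ^ q * ENNReal.ofReal (‖x‖ ^ β)) ^ (1/q)
        ≤ C * (∫⁻ x, u x ^ p * ENNReal.ofReal (‖x‖ ^ α)) ^ (1/p) := by
  have : Nonempty (Fin n) := ⟨⟨0, hn⟩⟩
  have hdim : (finrank ℝ (EuclideanSpace ℝ (Fin n)) : ℝ) = n := by
    rw [finrank_euclideanSpace_fin]
  rw [← hdim] at hα hrel
  exact exists_conjugateHardy_le volume hp hpq hα hrel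
end
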